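/- arXiv:1608.05836 — 7 statements merged into one kernel-verified Lean document; each statement's English description precedes it below -/
import Mathlib

section
/- For each i ∈ {1,…,d} let (a^{(i)}_n)_{n∈ℕ^d} be reals defining the linear operator 𝔡_i p = ∑_{n∈ℕ^d} a^{(i)}_n ∂_{x₁}^{n₁}⋯∂_{x_d}^{n_d} p on ℝ[x₁,…,x_d] (a finite sum on each polynomial), and assume (𝔡₁,…,𝔡_d) is a system of delta operators. Then (𝔡₁,…,𝔡_d) is a strict system — i.e., for every i and every polynomial p: if the degree of p in the variable x_i is m ≥ 1 then the degree of 𝔡_i p in x_i is exactly m−1, and if p does not involve x_i then 𝔡_i p = 0 — if and only if for every i one has a^{(i)}_n = 0 whenever n_i = 0, and a^{(i)}_{e_i} ≠ 0. -/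
open MvPolynomial

noncomputable section

/-- The algebra of real polynomials in `d` variables `x₁, …, x_d`. -/
abbrev MvP (d : ℕ) := MvPolynomial (Fin d) ℝ

/-- The shift operator `E_v : p(x) ↦ p(x + v)`. -/
def shiftOp {d : ℕ} (v : Fin d → ℝ) : Module.End ℝ (MvP d) :=
  (MvPolynomial.aeval (fun i => X i + C (v i)) : MvP d →ₐ[ℝ] MvP d).toLinearMap

/-- A linear operator on `ℝ[x₁,…,x_d]` is shift-invariant if it commutes with
every shift operator. -/
def ShiftInv {d : ℕ} (L : Module.End ℝ (MvP d)) : Prop :=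
  ∀ v : Fin d → ℝ, L * shiftOp v = shiftOp v * L

/-- `(𝔡₁, …, 𝔡_d)` is a system of delta operators: each `𝔡_i` is shift-invariant,
each `𝔡_i` maps every homogeneous linear polynomial to a constant, and for a
nonzero homogeneous linear polynomial at least one `𝔡_i p` is nonzero. -/
def IsDeltaSystem {d : ℕ} (D : Fin d → Module.End ℝ (MvP d)) : Prop :=
  (∀ i, ShiftInv (D i)) ∧
  ∀ a : Fin d → ℝ,
    (∀ i, ∃ c : ℝ, D i (∑ j, C (a j) * X j) = C c) ∧
    ((∑ j, C (a j) * X j) ≠ 0 → ∃ i, D i (∑ j, C (a j) * X j) ≠ 0)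

/-- The composite partial-derivative operator `∂^n = ∂₁^{n₁} ∘ ⋯ ∘ ∂_d^{n_d}`. -/
def pdpow {d : ℕ} (n : Fin d → ℕ) : Module.End ℝ (MvP d) :=
  (List.ofFn fun i => ((MvPolynomial.pderiv (R := ℝ) i).toLinearMap) ^ (n i)).prod

/-- `(𝔡₁,…,𝔡_d)` is a strict system: each `𝔡_i` reduces the degree in the
variable `x_i` by exactly one, and kills polynomials not involving `x_i`. -/
def IsStrictSystem {d : ℕ} (D : Fin d → Module.End ℝ (MvP d)) : Prop :=
  ∀ (i : Fin d) (p : MvP d),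
    (1 ≤ degreeOf i p → degreeOf i (D i p) = degreeOf i p - 1) ∧
    (degreeOf i p = 0 → D i p = 0)

/-! In coefficients, `∂ⁿ` sends `x^(K + n)` to `(K + n)!/K! · x^K`, so the constant term of
`𝔡ᵢ xⁿ` is `a⁽ⁱ⁾ₙ n!`. Strictness kills `𝔡ᵢ xⁿ` when `nᵢ = 0`. By the delta condition `𝔡ᵢ xᵢ` is a
constant, hence equal to its constant term `a⁽ⁱ⁾_{eᵢ}`, and it is nonzero because every `𝔡ₖ` with
`k ≠ i` kills `xᵢ`.

Conversely, if only `∂ⁿ` with `nᵢ ≥ 1` occur in `𝔡ᵢ`, it lowers the degree in `xᵢ`. It lowers it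
by exactly one: among the monomials `x^M` of `p` of top degree in `xᵢ` pick one of largest total
degree; then the coefficient of `x^(M - eᵢ)` in `𝔡ᵢ p` receives only the term
`a⁽ⁱ⁾_{eᵢ} Mᵢ p_M`. -/

namespace MvPolynomial

variable {σ R : Type*} [CommSemiring R]

theorem coeff_pderiv_pow (i : σ) (k : ℕ) (p : MvPolynomial σ R) (K : σ →₀ ℕ) :
    coeff K (((pderiv i).toLinearMap ^ k) p) =
      coeff (K + Finsupp.single i k) p * (K i + k).descFactorial k := by
  induction k generalizing p with
  | zero => simp
  | succ k ih =>
    rw [pow_succ, Module.End.mul_apply, ih, Derivation.coeFn_coe, coeff_pderiv, add_assoc,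
      ← Finsupp.single_add, Finsupp.add_apply, Finsupp.single_eq_same, ← add_assoc,
      Nat.succ_descFactorial_succ]
    push_cast
    ring

theorem coeff_list_prod_pderiv_pow (n : σ → ℕ) {l : List σ} (hl : l.Nodup)
    (p : MvPolynomial σ R) (K : σ →₀ ℕ) :
    coeff K ((l.map fun i => (pderiv i).toLinearMap ^ n i).prod p) =
      coeff (K + (l.map fun i => Finsupp.single i (n i)).sum) p *
        (l.map fun i => ((K i + n i).descFactorial (n i) : R)).prod := by
  induction l generalizing K with
  | nil => simp
  | cons i l ih =>
    obtain ⟨hi, hl⟩ := List.nodup_cons.mp hl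
    have hfactors :
        (l.map fun j => (((K + Finsupp.single i (n i)) j + n j).descFactorial (n j) : R)) =
          l.map fun j => ((K j + n j).descFactorial (n j) : R) :=
      List.map_congr_left fun j hj => by
        rw [Finsupp.add_apply, Finsupp.single_eq_of_ne (ne_of_mem_of_not_mem hj hi), add_zero]
    simp only [List.map_cons, List.prod_cons, List.sum_cons, Module.End.mul_apply]
    rw [coeff_pderiv_pow, ih hl, hfactors, add_assoc]
    ring

theorem coeff_eq_zero_of_degreeOf_lt {p : MvPolynomial σ R} {M : σ →₀ ℕ} (i : σ)
    (h : degreeOf i p < M i) : coeff M p = 0 :=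
  notMem_support_iff.mp (notMem_support_of_degreeOf_lt i h)

theorem exists_coeff_ne_zero_degreeOf_max {p : MvPolynomial σ R} (hp : p ≠ 0) (i : σ) :
    ∃ M, coeff M p ≠ 0 ∧ M i = degreeOf i p ∧
      ∀ M', coeff M' p ≠ 0 → M' i = degreeOf i p → M'.degree ≤ M.degree := by
  obtain ⟨M₁, hM₁, hM₁i⟩ :=
    Finset.exists_mem_eq_sup p.support (support_nonempty.mpr hp) fun M => M i
  obtain ⟨M, hM, hmax⟩ := Finset.exists_max_image
    (p.support.filter fun M => M i = degreeOf i p) Finsupp.degree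
    ⟨M₁, Finset.mem_filter.mpr ⟨hM₁, by rw [degreeOf_eq_sup, hM₁i]⟩⟩
  obtain ⟨hM, hMi⟩ := Finset.mem_filter.mp hM
  exact ⟨M, mem_support_iff.mp hM, hMi, fun M' hM' hM'i =>
    hmax M' (Finset.mem_filter.mpr ⟨mem_support_iff.mpr hM', hM'i⟩)⟩

end MvPolynomial

theorem Finsupp.eq_single_one_of_degree_le_one {σ : Type*} {N : σ →₀ ℕ} {i : σ} (hi : 1 ≤ N i)
    (h : N.degree ≤ 1) : N = Finsupp.single i 1 := by
  have hle : Finsupp.single i 1 ≤ N := Finsupp.single_le_iff.mpr hi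
  have hdeg := congrArg Finsupp.degree (tsub_add_cancel_of_le hle)
  rw [map_add, Finsupp.degree_single] at hdeg
  have hrest : N - Finsupp.single i 1 = 0 :=
    (Finsupp.degree_eq_zero_iff _).mp (by omega)
  rw [← tsub_add_cancel_of_le hle, hrest, zero_add]

section DiffOp

variable {d : ℕ}

theorem coeff_pdpow (n : Fin d → ℕ) (p : MvP d) (K : Fin d →₀ ℕ) :
    coeff K (pdpow n p) = coeff (K + Finsupp.equivFunOnFinite.symm n) p *
      ∏ j, ((K j + n j).descFactorial (n j) : ℝ) := by
  rw [pdpow, List.ofFn_eq_map, coeff_list_prod_pderiv_pow n (List.nodup_finRange d),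
    ← List.ofFn_eq_map, List.sum_ofFn, ← List.ofFn_eq_map, List.prod_ofFn,
    Finsupp.equivFunOnFinite_symm_eq_sum]

theorem pdpow_eq_zero_of_degreeOf_lt {n : Fin d → ℕ} {p : MvP d} (j : Fin d)
    (h : degreeOf j p < n j) : pdpow n p = 0 := by
  ext K
  rw [coeff_pdpow, coeff_zero,
    coeff_eq_zero_of_degreeOf_lt j (h.trans_le (Nat.le_add_left _ _)), zero_mul]

def diffOp (b : (Fin d → ℕ) → ℝ) (p : MvP d) : MvP d :=
  ∑ᶠ n, b n • pdpow n p

theorem hasFiniteSupport_smul_pdpow (b : (Fin d → ℕ) → ℝ) (p : MvP d) :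
    Function.HasFiniteSupport fun n => b n • pdpow n p := by
  refine (Fintype.piFinset fun j => Finset.Iic (degreeOf j p)).finite_toSet.subset fun n hn => ?_
  simp only [Fintype.coe_piFinset, Set.mem_pi, Set.mem_univ, Finset.mem_coe, Finset.mem_Iic,
    forall_true_left]
  intro j
  by_contra hj
  exact hn (by simp only [pdpow_eq_zero_of_degreeOf_lt j (not_le.mp hj), smul_zero])

theorem coeff_diffOp (b : (Fin d → ℕ) → ℝ) (p : MvP d) (K : Fin d →₀ ℕ) :
    coeff K (diffOp b p) = ∑ᶠ n, b n * (coeff (K + Finsupp.equivFunOnFinite.symm n) p *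
      ∏ j, ((K j + n j).descFactorial (n j) : ℝ)) := by
  rw [diffOp, ← coeffAddMonoidHom_apply,
    AddMonoidHom.map_finsum _ (hasFiniteSupport_smul_pdpow b p)]
  simp only [coeffAddMonoidHom_apply, coeff_smul, coeff_pdpow, smul_eq_mul]

theorem coeff_zero_diffOp_monomial (b : (Fin d → ℕ) → ℝ) (M : Fin d →₀ ℕ) :
    coeff 0 (diffOp b (monomial M 1)) = b M * ∏ j, ((M j).factorial : ℝ) := by
  rw [coeff_diffOp, finsum_eq_single _ ⇑M]
  · simp [Nat.descFactorial_self]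
  · intro n hn
    rw [zero_add, coeff_monomial, if_neg fun h => hn (by rw [h, Finsupp.coe_equivFunOnFinite_symm]),
      zero_mul, mul_zero]

variable {b : (Fin d → ℕ) → ℝ} {i : Fin d}

theorem eq_zero_of_forall_diffOp_eq_zero (h : ∀ p, degreeOf i p = 0 → diffOp b p = 0)
    (n : Fin d → ℕ) (hn : n i = 0) : b n = 0 := by
  set M := Finsupp.equivFunOnFinite.symm n
  have hM : coeff 0 (diffOp b (monomial M 1)) = 0 := by
    rw [h _ (by rw [degreeOf_monomial_eq _ _ one_ne_zero]; exact hn), coeff_zero]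
  rw [coeff_zero_diffOp_monomial, Finsupp.coe_equivFunOnFinite_symm] at hM
  exact (mul_eq_zero.mp hM).resolve_right <|
    Finset.prod_ne_zero_iff.mpr fun j _ => Nat.cast_ne_zero.mpr (Nat.factorial_ne_zero _)

theorem coeff_diffOp_eq_zero_of_degreeOf_le (hb : ∀ n, n i = 0 → b n = 0) {p : MvP d}
    {K : Fin d →₀ ℕ} (hK : degreeOf i p ≤ K i) : coeff K (diffOp b p) = 0 := by
  rw [coeff_diffOp]
  refine finsum_eq_zero_of_forall_eq_zero fun n => ?_
  rcases Nat.eq_zero_or_pos (n i) with hn | hn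
  · rw [hb n hn, zero_mul]
  · rw [coeff_eq_zero_of_degreeOf_lt i (hK.trans_lt (Nat.lt_add_of_pos_right hn)), zero_mul,
      mul_zero]

theorem diffOp_eq_zero_of_degreeOf_eq_zero (hb : ∀ n, n i = 0 → b n = 0) {p : MvP d}
    (hp : degreeOf i p = 0) : diffOp b p = 0 := by
  ext K
  rw [coeff_zero]
  exact coeff_diffOp_eq_zero_of_degreeOf_le hb (by omega)

theorem degreeOf_diffOp_le (hb : ∀ n, n i = 0 → b n = 0) (p : MvP d) :
    degreeOf i (diffOp b p) ≤ degreeOf i p - 1 :=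
  degreeOf_le_iff.mpr fun K hK => by
    by_contra h
    exact mem_support_iff.mp hK (coeff_diffOp_eq_zero_of_degreeOf_le hb (by omega))

theorem coeff_diffOp_of_degree_max (hb : ∀ n, n i = 0 → b n = 0) {p : MvP d}
    {M : Fin d →₀ ℕ} (hMi : M i = degreeOf i p)
    (hmax : ∀ M', coeff M' p ≠ 0 → M' i = degreeOf i p → M'.degree ≤ M.degree)
    {K : Fin d →₀ ℕ} (hK : K + Finsupp.single i 1 = M) :
    coeff K (diffOp b p) = b (Pi.single i 1) * (coeff M p * M i) := by
  rw [coeff_diffOp, finsum_eq_single _ (Pi.single i 1)]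
  · rw [Finsupp.equivFunOnFinite_symm_single, hK, Fintype.prod_eq_single i fun j hj => by
      rw [Pi.single_eq_of_ne hj, Nat.descFactorial_zero, Nat.cast_one]]
    rw [Pi.single_eq_same, Nat.descFactorial_one, ← hK, Finsupp.add_apply, Finsupp.single_eq_same]
  · intro n hne
    rcases Nat.eq_zero_or_pos (n i) with hn | hn
    · rw [hb n hn, zero_mul]
    by_contra hcoeff
    set N := Finsupp.equivFunOnFinite.symm n
    have hKN : coeff (K + N) p ≠ 0 := fun h => hcoeff (by rw [h, zero_mul, mul_zero])
    have hKi : K i + 1 = M i := by rw [← hK, Finsupp.add_apply, Finsupp.single_eq_same]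
    have hKNi : (K + N) i ≤ M i := hMi ▸ le_degreeOf_of_mem_support i (mem_support_iff.mpr hKN)
    have hNi : N i = 1 := by
      have : N i = n i := rfl
      rw [Finsupp.add_apply] at hKNi
      omega
    have hdeg := hmax _ hKN (by rw [← hMi, ← hKi, Finsupp.add_apply, hNi])
    rw [← hK, map_add, map_add, Finsupp.degree_single] at hdeg
    have hN := Finsupp.eq_single_one_of_degree_le_one (i := i) hNi.ge (by omega)
    exact hne (by rw [← Finsupp.single_eq_pi_single, ← hN, Finsupp.coe_equivFunOnFinite_symm])

theorem degreeOf_diffOp (hb : ∀ n, n i = 0 → b n = 0) (hbi : b (Pi.single i 1) ≠ 0)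
    {p : MvP d} (hp : 1 ≤ degreeOf i p) : degreeOf i (diffOp b p) = degreeOf i p - 1 := by
  refine le_antisymm (degreeOf_diffOp_le hb p) ?_
  have hp0 : p ≠ 0 := by rintro rfl; simp at hp
  obtain ⟨M, hM, hMi, hmax⟩ := exists_coeff_ne_zero_degreeOf_max hp0 i
  have hK : M - Finsupp.single i 1 + Finsupp.single i 1 = M :=
    tsub_add_cancel_of_le (Finsupp.single_le_iff.mpr (by omega))
  have hcoeff : coeff (M - Finsupp.single i 1) (diffOp b p) ≠ 0 := by
    rw [coeff_diffOp_of_degree_max hb hMi hmax hK]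
    exact mul_ne_zero hbi (mul_ne_zero hM (Nat.cast_ne_zero.mpr (by omega)))
  calc degreeOf i p - 1 = (M - Finsupp.single i 1 : Fin d →₀ ℕ) i := by
        rw [Finsupp.tsub_apply, Finsupp.single_eq_same, hMi]
    _ ≤ degreeOf i (diffOp b p) := le_degreeOf_of_mem_support i (mem_support_iff.mpr hcoeff)

end DiffOp

theorem apply_single_ne_zero_of_isStrictSystem {d : ℕ} {a : Fin d → (Fin d → ℕ) → ℝ}
    {D : Fin d → Module.End ℝ (MvP d)} (hD : ∀ i, ⇑(D i) = diffOp (a i))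
    (hsys : IsDeltaSystem D) (hstrict : IsStrictSystem D) (i : Fin d) :
    a i (Pi.single i 1) ≠ 0 := by
  have hX : ∑ j, C ((Pi.single i 1 : Fin d → ℝ) j) * X j = (X i : MvP d) := by
    simp [Pi.single_apply]
  obtain ⟨c, hc⟩ := (hsys.2 (Pi.single i 1)).1 i
  obtain ⟨k, hk⟩ := (hsys.2 (Pi.single i 1)).2 (hX ▸ X_ne_zero i)
  rw [hX] at hc hk
  obtain rfl : k = i := by
    by_contra hki
    exact hk ((hstrict k (X i)).2 (by simp [degreeOf_X, hki]))
  have hc' : c = a k (Pi.single k 1) := by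
    have h0 : coeff 0 (D k (X k)) = c := by rw [hc, coeff_C, if_pos rfl]
    have hfact : ∏ j, ((Finsupp.single k 1 j).factorial : ℝ) = 1 :=
      Finset.prod_eq_one fun j _ => by
        rcases eq_or_ne j k with rfl | hj
        · simp
        · simp [hj]
    rw [hD, X, coeff_zero_diffOp_monomial, hfact, mul_one, Finsupp.single_eq_pi_single] at h0
    exact h0.symm
  intro ha
  exact hk (by rw [hc, hc', ha, map_zero])

theorem strict_system_iff_general {d : ℕ}
    (a : Fin d → (Fin d → ℕ) → ℝ)
    (D : Fin d → Module.End ℝ (MvP d))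
    (hD : ∀ (i : Fin d) (p : MvP d), D i p = ∑ᶠ n : Fin d → ℕ, a i n • pdpow n p)
    (hsys : IsDeltaSystem D) :
    IsStrictSystem D ↔
      ∀ i : Fin d, (∀ n : Fin d → ℕ, n i = 0 → a i n = 0) ∧
        a i (Pi.single i 1) ≠ 0 := by
  have hD' : ∀ i, ⇑(D i) = diffOp (a i) := fun i => funext (hD i)
  constructor
  · intro hstrict i
    refine ⟨eq_zero_of_forall_diffOp_eq_zero fun p hp => ?_, ?_⟩
    · exact hD' i ▸ (hstrict i p).2 hp
    · exact apply_single_ne_zero_of_isStrictSystem hD' hsys hstrict i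
  · intro h i p
    rw [hD' i]
    exact ⟨degreeOf_diffOp (h i).1 (h i).2, diffOp_eq_zero_of_degreeOf_eq_zero (h i).1⟩

/-- a system of delta operators `𝔡_i = ∑_n a^{(i)}_n ∂^n` is strict
iff for every `i`: `a^{(i)}_n = 0` whenever `n_i = 0`, and `a^{(i)}_{e_i} ≠ 0`. -/
theorem strict_system_iff {d : ℕ} (hd : 1 ≤ d)
    (a : Fin d → (Fin d → ℕ) → ℝ)
    (D : Fin d → Module.End ℝ (MvP d))
    (hD : ∀ (i : Fin d) (p : MvP d), D i p = ∑ᶠ n : Fin d → ℕ, a i n • pdpow n p)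
    (hsys : IsDeltaSystem D) :
    IsStrictSystem D ↔
      ∀ i : Fin d, (∀ n : Fin d → ℕ, n i = 0 → a i n = 0) ∧
        a i (Pi.single i 1) ≠ 0 :=
  strict_system_iff_general a D hD hsys

end
end

section
/- Let Δ = (𝔡₁,…,𝔡_d) be a system of delta operators on ℝ[x₁,…,x_d] with basic sequence (p_n)_{n∈ℕ^d}. Fix n ∈ ℕ^d and, for each k ∈ ℕ^d with k ≤ n, a shift-invariant linear operator L_k on ℝ[x₁,…,x_d] with L_k(1) ≠ 0, and define the linear functional Ψ_k(q) = (L_k 𝔡^k q)(0) on Π_n(Δ). Then the functionals {Ψ_k : k ≤ n} are linearly independent over Π_n(Δ): if (λ_k)_{k≤n} are real numbers such that ∑_{k≤n} λ_k Ψ_k(q) = 0 for every q ∈ Π_n(Δ), then λ_k = 0 for all k ≤ n. -/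
open MvPolynomial

noncomputable section

/-- `𝔡^k = 𝔡₁^{k₁} ∘ ⋯ ∘ 𝔡_d^{k_d}`. -/
def dpow {d : ℕ} (D : Fin d → Module.End ℝ (MvP d)) (k : Fin d → ℕ) :
    Module.End ℝ (MvP d) :=
  (List.ofFn fun i => (D i) ^ (k i)).prod

/-- `(p_n)_{n ∈ ℕ^d}` is a basic sequence of the system `D`:
`deg p_n = |n|`, `p_0 = 1`, `p_n(0) = 0` for `|n| ≥ 1`, and
`𝔡_i p_n = n_i • p_{n - e_i}`. -/
def IsBasicSeq {d : ℕ} (D : Fin d → Module.End ℝ (MvP d))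
    (p : (Fin d → ℕ) → MvP d) : Prop :=
  (∀ n : Fin d → ℕ, (p n).totalDegree = ∑ i, n i) ∧
  p 0 = 1 ∧
  (∀ n : Fin d → ℕ, 1 ≤ ∑ i, n i → eval (0 : Fin d → ℝ) (p n) = 0) ∧
  ∀ (n : Fin d → ℕ) (i : Fin d), D i (p n) = (n i : ℝ) • p (n - Pi.single i 1)

/-- `Π_n(Δ)`: the span of the basic polynomials `p_k` with `k ≤ n`
(componentwise order). -/
def Pin {d : ℕ} (p : (Fin d → ℕ) → MvP d) (n : Fin d → ℕ) : Submodule ℝ (MvP d) :=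
  Submodule.span ℝ (p '' {k | k ≤ n})

/-- `n! = n₁! ⋯ n_d!` as a real number. -/
def natFact {d : ℕ} (n : Fin d → ℕ) : ℝ := ∏ i, (Nat.factorial (n i) : ℝ)

/-- `t` is the delta Gončarov polynomial `t_n(·;Z)` for the system `D` with
basic sequence `p` and grid `Z`: `t ∈ Π_n(Δ)` and
`(𝔡^k t)(z_k) = n!·δ_{k,n}` for all `k ≤ n`. -/
def IsGoncarov {d : ℕ} (D : Fin d → Module.End ℝ (MvP d))
    (p : (Fin d → ℕ) → MvP d) (Z : (Fin d → ℕ) → (Fin d → ℝ))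
    (n : Fin d → ℕ) (t : MvP d) : Prop :=
  t ∈ Pin p n ∧
  ∀ k ≤ n, eval (Z k) (dpow D k t) = if k = n then natFact n else 0

section Aux
variable {d : ℕ}

lemma myindex_eq (m : Fin d → ℕ) (i : Fin d) (r : ℕ) :
    m - Pi.single i 1 - Pi.single i r = m - Pi.single i (r + 1) := by
  funext x
  by_cases h : x = i
  · subst h; simp [Nat.sub_sub, Nat.add_comm]
  · simp [Pi.single_eq_of_ne h]

lemma mypow_apply (D : Fin d → Module.End ℝ (MvP d)) (p : (Fin d → ℕ) → MvP d)
    (hrel : ∀ (m : Fin d → ℕ) (i : Fin d), D i (p m) = (m i : ℝ) • p (m - Pi.single i 1))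
    (i : Fin d) :
    ∀ (r : ℕ) (m : Fin d → ℕ),
      ((D i) ^ r) (p m) = ((m i).descFactorial r : ℝ) • p (m - Pi.single i r) := by
  intro r
  induction r with
  | zero => intro m; simp
  | succ r ih =>
    intro m
    have h1 : ((D i) ^ (r + 1)) (p m) = ((D i) ^ r) ((D i) (p m)) := by
      rw [pow_succ]; rfl
    rw [h1, hrel, map_smul, ih, myindex_eq]
    have hidx : ((m - Pi.single i 1 : Fin d → ℕ)) i = m i - 1 := by
      simp [Pi.sub_apply]
    rw [hidx, smul_smul]
    congr 1
    have hnat : (m i) * (m i - 1).descFactorial r = (m i).descFactorial (r + 1) := by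
      rcases hmi : m i with _ | s
      · simp
      · rw [Nat.succ_sub_one, Nat.succ_descFactorial_succ]
    rw [← hnat]; push_cast; ring

lemma mylist_apply (D : Fin d → Module.End ℝ (MvP d)) (p : (Fin d → ℕ) → MvP d)
    (hrel : ∀ (m : Fin d → ℕ) (i : Fin d), D i (p m) = (m i : ℝ) • p (m - Pi.single i 1))
    (j : Fin d → ℕ) :
    ∀ (l : List (Fin d)), l.Nodup → ∀ m : Fin d → ℕ,
      ((l.map fun i => (D i) ^ (j i)).prod) (p m)
        = ((l.map fun i => ((m i).descFactorial (j i) : ℝ)).prod)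
            • p (m - fun i => if i ∈ l then j i else 0) := by
  intro l
  induction l with
  | nil =>
    intro _ m
    have h : (m - fun _ => (0:ℕ)) = m := by funext x; simp
    simp [h]
  | cons a t ih =>
    intro hnd m
    have hat : a ∉ t := (List.nodup_cons.mp hnd).1
    have hnt : t.Nodup := (List.nodup_cons.mp hnd).2
    have hstep : ((((a :: t).map fun i => (D i) ^ (j i))).prod) (p m)
        = ((D a) ^ (j a)) (((t.map fun i => (D i) ^ (j i)).prod) (p m)) := by
      simp [List.map_cons, List.prod_cons, Module.End.mul_apply]
    rw [hstep, ih hnt, map_smul, mypow_apply D p hrel]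
    have h1 : (m - fun i => if i ∈ t then j i else 0) a = m a := by simp [hat]
    have h2 : (m - fun i => if i ∈ t then j i else 0) - Pi.single a (j a)
        = m - fun i => if i ∈ a :: t then j i else 0 := by
      funext x
      by_cases hx : x = a
      · subst hx; simp [hat]
      · simp [Pi.single_eq_of_ne hx, List.mem_cons, hx]
    rw [h1, h2, smul_smul]
    simp [List.prod_cons, mul_comm]

lemma mydpow_apply (D : Fin d → Module.End ℝ (MvP d)) (p : (Fin d → ℕ) → MvP d)
    (hrel : ∀ (m : Fin d → ℕ) (i : Fin d), D i (p m) = (m i : ℝ) • p (m - Pi.single i 1))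
    (j m : Fin d → ℕ) :
    (dpow D j) (p m) = (∏ i, ((m i).descFactorial (j i) : ℝ)) • p (m - j) := by
  have h := mylist_apply D p hrel j (List.finRange d) (List.nodup_finRange d) m
  rw [dpow, List.ofFn_eq_map, h]
  have hc : (List.map (fun i => ((m i).descFactorial (j i) : ℝ)) (List.finRange d)).prod
      = ∏ i, ((m i).descFactorial (j i) : ℝ) := by
    rw [← List.ofFn_eq_map, List.prod_ofFn]
  have hidx : (m - fun i => if i ∈ List.finRange d then j i else 0) = m - j := by
    funext x; simp [List.mem_finRange]
  rw [hc, hidx]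

lemma myeval_zero_shiftOp (v : Fin d → ℝ) (q : MvP d) :
    eval (0 : Fin d → ℝ) (shiftOp v q) = eval v q := by
  have key : ∀ q : MvP d,
      eval (0 : Fin d → ℝ) (aeval (fun i => X i + C (v i)) q) = eval v q := by
    intro q
    induction q using MvPolynomial.induction_on with
    | C a => simp
    | add p q hp hq => simp only [map_add, hp, hq]
    | mul_X q i hq =>
        simp only [map_mul, map_add, aeval_X, eval_X, eval_C, eval_mul, eval_add, hq,
          Pi.zero_apply, zero_add]
  simpa [shiftOp] using key q

lemma myshiftInv_one_eq_C {L : Module.End ℝ (MvP d)} (h : ShiftInv L) :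
    L 1 = C (eval (0 : Fin d → ℝ) (L 1)) := by
  have key : ∀ v : Fin d → ℝ, shiftOp v (L 1) = L 1 := by
    intro v
    have h1 := congrArg (fun T : Module.End ℝ (MvP d) => T 1) (h v)
    simp only [Module.End.mul_apply] at h1
    have h2 : shiftOp v (1 : MvP d) = 1 := by simp [shiftOp]
    rw [h2] at h1
    exact h1.symm
  apply MvPolynomial.funext
  intro x
  have hx := congrArg (eval (0 : Fin d → ℝ)) (key x)
  rw [myeval_zero_shiftOp] at hx
  simp [hx]

end Aux

/-- the functionals `Ψ_k(q) = (L_k 𝔡^k q)(0)`, `k ≤ n`, are linearly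
independent over `Π_n(Δ)`. -/
theorem functionals_linearly_independent {d : ℕ} (hd : 1 ≤ d)
    (D : Fin d → Module.End ℝ (MvP d)) (hD : IsDeltaSystem D)
    (p : (Fin d → ℕ) → MvP d) (hp : IsBasicSeq D p)
    (n : Fin d → ℕ)
    (L : (Fin d → ℕ) → Module.End ℝ (MvP d))
    (hL : ∀ k ≤ n, ShiftInv (L k) ∧ (L k) (1 : MvP d) ≠ 0)
    (lam : (Fin d → ℕ) → ℝ)
    (hlam : ∀ q ∈ Pin p n,
      ∑ k ∈ Finset.Iic n, lam k * eval (0 : Fin d → ℝ) ((L k) ((dpow D k) q)) = 0) :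
    ∀ k ≤ n, lam k = 0 := by
  obtain ⟨hdeg, hp0, hev, hrel⟩ := hp
  have hq_mem : ∀ k ≤ n, p k ∈ Pin p n := fun k hk =>
    Submodule.subset_span ⟨k, hk, rfl⟩
  have key : ∀ N : ℕ, ∀ k ≤ n, (∑ i, k i) = N → lam k = 0 := by
    intro N
    induction N using Nat.strong_induction_on with
    | _ N ih =>
      intro k hk hN
      -- the constant c_k
      set c : ℝ := eval (0 : Fin d → ℝ) ((L k) 1) with hc
      have hcne : c ≠ 0 := by
        intro h0
        apply (hL k hk).2
        have := myshiftInv_one_eq_C (hL k hk).1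
        rw [this, ← hc, h0, map_zero]
      have hsum := hlam (p k) (hq_mem k hk)
      have hsum' : ∑ j ∈ Finset.Iic n, lam j * eval (0 : Fin d → ℝ) ((L j) ((dpow D j) (p k)))
          = lam k * (natFact k * c) := by
        rw [Finset.sum_eq_single k]
        · -- value at j = k
          rw [mydpow_apply D p hrel]
          have hkk : (k - k : Fin d → ℕ) = 0 := by funext x; simp
          have hfac : (∏ i, ((k i).descFactorial (k i) : ℝ)) = natFact k := by
            simp [natFact, Nat.descFactorial_self]
          rw [hkk, hp0, hfac, map_smul]
          rw [smul_eq_C_mul, map_mul, eval_C]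
        · intro j hj hjk
          by_cases hle : j ≤ k
          · have hlt : (∑ i, j i) < N := by
              rw [← hN]
              have hle' : (∑ i, j i) ≤ ∑ i, k i :=
                Finset.sum_le_sum fun i _ => hle i
              rcases lt_or_eq_of_le hle' with h | h
              · exact h
              · exfalso
                apply hjk
                funext i
                exact (Finset.sum_eq_sum_iff_of_le fun i _ => hle i).mp h i
                  (Finset.mem_univ i)
            rw [ih _ hlt j (Finset.mem_Iic.mp hj) rfl]
            ring
          · have hz : (dpow D j) (p k) = 0 := by
              rw [mydpow_apply D p hrel]
              have : (∏ i, ((k i).descFactorial (j i) : ℝ)) = 0 := by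
                rw [Pi.le_def, not_forall] at hle
                obtain ⟨i, hi⟩ := hle
                apply Finset.prod_eq_zero (Finset.mem_univ i)
                rw [Nat.cast_eq_zero, Nat.descFactorial_eq_zero_iff_lt]
                exact Nat.lt_of_not_le hi
              rw [this, zero_smul]
            rw [hz, map_zero, map_zero, mul_zero]
        · intro hkn
          exact absurd (Finset.mem_Iic.mpr hk) hkn
      rw [hsum] at hsum'
      have hfacne : natFact k ≠ 0 := by
        have : 0 < natFact k := Finset.prod_pos fun i _ => by
          exact_mod_cast Nat.factorial_pos (k i)
        exact this.ne'
      rcases mul_eq_zero.mp hsum'.symm with h | h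
      · exact h
      · exact absurd h (mul_ne_zero hfacne hcne)
  intro k hk
  exact key (∑ i, k i) k hk rfl


end
end

section
/- Let Δ = (𝔡₁,…,𝔡_d) be a system of delta operators on ℝ[x₁,…,x_d] with basic sequence (p_n)_{n∈ℕ^d}. Fix n ∈ ℕ^d and, for each k ≤ n, a shift-invariant linear operator L_k on ℝ[x₁,…,x_d] with L_k(1) ≠ 0. Then for every family of real numbers (b_k)_{k≤n} there exists a unique polynomial q ∈ Π_n(Δ) such that (L_k 𝔡^k q)(0) = b_k for all k ≤ n. -/
open MvPolynomial

noncomputable section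

/-!
Writing `q = ∑ c_m p_m`, the conditions become a square linear system in `(c_m)_{m ≤ n}` with
matrix `(L_k 𝔡^k p_m)(0)`. Since `𝔡^k p_m = (m)_k p_{m-k}` with falling factorials `(m)_k`, this
matrix vanishes unless `k ≤ m`, and its diagonal entry is `k! · (L_k 1)(0)`, which is nonzero
because a shift-invariant operator maps the constant `1` to a constant. A system that is
triangular for a partial order and has nonzero diagonal is uniquely solvable, by downward
induction over the finite poset `{m ≤ n}`.
-/

section Triangular

variable {K V ι : Type*} [Field K] [AddCommGroup V] [Module K V] [Fintype ι] [PartialOrder ι]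
  {φ : ι → V →ₗ[K] K} {v : ι → V}

theorem injective_pi_comp_linearCombination_of_triangular
    (h_triangular : ∀ k m, ¬ k ≤ m → φ k (v m) = 0) (h_diag : ∀ k, φ k (v k) ≠ 0) :
    Function.Injective (LinearMap.pi φ ∘ₗ Fintype.linearCombination K v) := by
  rw [← LinearMap.ker_eq_bot, LinearMap.ker_eq_bot']
  intro c hc
  funext m
  induction m using WellFoundedGT.induction with
  | _ m ih =>
    have hm := congrFun hc m
    simp only [LinearMap.comp_apply, LinearMap.pi_apply, Fintype.linearCombination_apply,
      map_sum, map_smul, smul_eq_mul, Pi.zero_apply] at hm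
    rw [Finset.sum_eq_single m] at hm
    · exact (mul_eq_zero.mp hm).resolve_right (h_diag m)
    · intro j _ hjm
      by_cases hmj : m ≤ j
      · rw [ih j (lt_of_le_of_ne hmj (Ne.symm hjm)), Pi.zero_apply, zero_mul]
      · rw [h_triangular m j hmj, mul_zero]
    · exact absurd (Finset.mem_univ m)

theorem existsUnique_mem_span_forall_apply_eq_of_triangular
    (h_triangular : ∀ k m, ¬ k ≤ m → φ k (v m) = 0) (h_diag : ∀ k, φ k (v k) ≠ 0) (b : ι → K) :
    ∃! q, q ∈ Submodule.span K (Set.range v) ∧ ∀ k, φ k q = b k := by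
  set T := LinearMap.pi φ ∘ₗ Fintype.linearCombination K v
  have hT : Function.Injective T := injective_pi_comp_linearCombination_of_triangular h_triangular h_diag
  obtain ⟨c, hc⟩ := LinearMap.injective_iff_surjective.mp hT b
  refine ⟨Fintype.linearCombination K v c, ⟨?_, fun k => congrFun hc k⟩, ?_⟩
  · exact Fintype.range_linearCombination K v ▸ LinearMap.mem_range_self _ c
  rintro q ⟨hq, hqb⟩
  rw [← Fintype.range_linearCombination K v] at hq
  obtain ⟨c', rfl⟩ := hq
  exact congrArg _ (hT (hc ▸ funext hqb))

end Triangular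

theorem eval_shiftOp {d : ℕ} (v w : Fin d → ℝ) (q : MvP d) :
    eval w (shiftOp v q) = eval (w + v) q := by
  have h := comp_aeval_apply (fun i => X i + C (v i)) (aeval w) q
  simp only [aeval_eq_eval, aeval_X, map_add, aeval_C, Algebra.algebraMap_self,
    RingHom.id_apply] at h
  rw [shiftOp, AlgHom.toLinearMap_apply, h]
  rfl

theorem ShiftInv.apply_one_eq_C {d : ℕ} {L : Module.End ℝ (MvP d)} (hL : ShiftInv L) :
    L 1 = C (eval 0 (L 1)) := by
  refine MvPolynomial.funext fun w => ?_
  have h := congrArg (eval 0) (LinearMap.congr_fun (hL w) 1)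
  have hC : shiftOp w (1 : MvP d) = 1 := map_one (aeval _)
  rw [Module.End.mul_apply, Module.End.mul_apply, hC, eval_shiftOp, zero_add] at h
  rw [h, eval_C]

theorem ShiftInv.eval_zero_apply_one_ne_zero {d : ℕ} {L : Module.End ℝ (MvP d)}
    (hL : ShiftInv L) (h1 : L 1 ≠ 0) : eval 0 (L 1) ≠ 0 := fun h0 =>
  h1 (by rw [hL.apply_one_eq_C, h0, map_zero])

theorem natFact_ne_zero {d : ℕ} (k : Fin d → ℕ) : natFact k ≠ 0 :=
  Finset.prod_ne_zero_iff.mpr fun _ _ => Nat.cast_ne_zero.mpr (Nat.factorial_ne_zero _)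

namespace IsBasicSeq

variable {d : ℕ} {D : Fin d → Module.End ℝ (MvP d)} {p : (Fin d → ℕ) → MvP d}

theorem pow_apply (hp : IsBasicSeq D p) (i : Fin d) (j : ℕ) (m : Fin d → ℕ) :
    (D i ^ j) (p m) = ((m i).descFactorial j : ℝ) • p (m - Pi.single i j) := by
  induction j with
  | zero => simp
  | succ j ih =>
    have h_sub : m - Pi.single i j - Pi.single i 1 = m - Pi.single i (j + 1) := by
      rw [tsub_tsub, ← Pi.single_add]
    rw [pow_succ', Module.End.mul_apply, ih, map_smul, hp.2.2.2, smul_smul, h_sub,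
      Nat.descFactorial_succ, Nat.cast_mul]
    simp [mul_comm]

theorem list_prod_apply (hp : IsBasicSeq D p) (k : Fin d → ℕ) {l : List (Fin d)}
    (hl : l.Nodup) (m : Fin d → ℕ) :
    (l.map fun i => D i ^ k i).prod (p m) =
      ((∏ i ∈ l.toFinset, (m i).descFactorial (k i) : ℕ) : ℝ) •
        p (m - ∑ i ∈ l.toFinset, Pi.single i (k i)) := by
  induction l with
  | nil => simp
  | cons i l ih =>
    obtain ⟨hi, hl⟩ := List.nodup_cons.mp hl
    have hi' : i ∉ l.toFinset := List.mem_toFinset.not.mpr hi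
    have h_untouched : (m - ∑ j ∈ l.toFinset, Pi.single j (k j)) i = m i := by
      simp [Finset.sum_apply, Pi.single_apply, hi]
    rw [List.map_cons, List.prod_cons, Module.End.mul_apply, ih hl, map_smul, hp.pow_apply,
      h_untouched, smul_smul, List.toFinset_cons, Finset.prod_insert hi',
      Finset.sum_insert hi', tsub_tsub, add_comm (∑ j ∈ l.toFinset, _), Nat.cast_mul, mul_comm]

theorem dpow_apply (hp : IsBasicSeq D p) (k m : Fin d → ℕ) :
    dpow D k (p m) = ((∏ i, (m i).descFactorial (k i) : ℕ) : ℝ) • p (m - k) := by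
  rw [dpow, List.ofFn_eq_map, hp.list_prod_apply k (List.nodup_finRange d),
    List.toFinset_finRange, Finset.univ_sum_single]

theorem dpow_apply_self (hp : IsBasicSeq D p) (k : Fin d → ℕ) :
    dpow D k (p k) = natFact k • 1 := by
  simp [hp.dpow_apply, hp.2.1, Nat.descFactorial_self, natFact]

theorem dpow_apply_of_not_le (hp : IsBasicSeq D p) {k m : Fin d → ℕ} (h : ¬ k ≤ m) :
    dpow D k (p m) = 0 := by
  obtain ⟨i, hi⟩ : ∃ i, m i < k i := by simpa [Pi.le_def] using h
  rw [hp.dpow_apply, Finset.prod_eq_zero (Finset.mem_univ i)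
    (Nat.descFactorial_eq_zero_iff_lt.mpr hi), Nat.cast_zero, zero_smul]

end IsBasicSeq

theorem exists_unique_interpolant_general {d : ℕ}
    (D : Fin d → Module.End ℝ (MvP d))
    (p : (Fin d → ℕ) → MvP d) (hp : IsBasicSeq D p)
    (n : Fin d → ℕ)
    (L : (Fin d → ℕ) → Module.End ℝ (MvP d))
    (hL : ∀ k ≤ n, ShiftInv (L k) ∧ (L k) (1 : MvP d) ≠ 0)
    (b : (Fin d → ℕ) → ℝ) :
    ∃! q : MvP d, q ∈ Pin p n ∧
      ∀ k ≤ n, eval (0 : Fin d → ℝ) ((L k) ((dpow D k) q)) = b k := by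
  let φ : Set.Iic n → MvP d →ₗ[ℝ] ℝ := fun k =>
    (aeval (0 : Fin d → ℝ)).toLinearMap ∘ₗ L k ∘ₗ dpow D k
  have h_triangular (k m : Set.Iic n) (hkm : ¬ k ≤ m) : φ k (p m) = 0 := by
    simp [φ, hp.dpow_apply_of_not_le (Subtype.coe_le_coe.not.mpr hkm)]
  have h_diag (k : Set.Iic n) : φ k (p k) ≠ 0 := by
    obtain ⟨hL_inv, hL_one⟩ := hL k k.2
    change eval 0 (L k (dpow D k (p k))) ≠ 0
    rw [hp.dpow_apply_self, map_smul, smul_eval]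
    exact mul_ne_zero (natFact_ne_zero k.1) (hL_inv.eval_zero_apply_one_ne_zero hL_one)
  have h_span : Pin p n = Submodule.span ℝ (Set.range fun k : Set.Iic n => p k) := by
    rw [Pin, Set.image_eq_range]; rfl
  rw [h_span]
  simpa [φ, Subtype.forall] using
    existsUnique_mem_span_forall_apply_eq_of_triangular h_triangular h_diag (fun k => b k)

/-- for every choice of data `(b_k)_{k ≤ n}` there is a unique
`q ∈ Π_n(Δ)` with `(L_k 𝔡^k q)(0) = b_k` for all `k ≤ n`. -/
theorem exists_unique_interpolant {d : ℕ} (hd : 1 ≤ d)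
    (D : Fin d → Module.End ℝ (MvP d)) (hD : IsDeltaSystem D)
    (p : (Fin d → ℕ) → MvP d) (hp : IsBasicSeq D p)
    (n : Fin d → ℕ)
    (L : (Fin d → ℕ) → Module.End ℝ (MvP d))
    (hL : ∀ k ≤ n, ShiftInv (L k) ∧ (L k) (1 : MvP d) ≠ 0)
    (b : (Fin d → ℕ) → ℝ) :
    ∃! q : MvP d, q ∈ Pin p n ∧
      ∀ k ≤ n, eval (0 : Fin d → ℝ) ((L k) ((dpow D k) q)) = b k :=
  exists_unique_interpolant_general D p hp n L hL b

end
end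

section
/- Let Δ = (𝔡₁,…,𝔡_d) be a system of delta operators on ℝ[x₁,…,x_d] with basic sequence (p_n)_{n∈ℕ^d}, and for each n ∈ ℕ^d let Φ_n = L_n∘𝔡^n, where L_n is a shift-invariant linear operator with L_n(1) ≠ 0. Then there exists a unique family (q_n)_{n∈ℕ^d} of polynomials in ℝ[x₁,…,x_d] such that (Φ_k q_n)(0) = n!·δ_{k,n} for all k, n ∈ ℕ^d; moreover this unique family satisfies deg q_n = |n| and q_n ∈ Π_n(Δ) for every n. -/
open MvPolynomial

noncomputable section

/-- The biorthogonality condition `(Φ_k q_n)(0) = n!·δ_{k,n}`, where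
`Φ_k = L_k ∘ 𝔡^k`. -/
def Biorthogonal {d : ℕ} (D : Fin d → Module.End ℝ (MvP d))
    (L : (Fin d → ℕ) → Module.End ℝ (MvP d))
    (q : (Fin d → ℕ) → MvP d) : Prop :=
  ∀ k n : Fin d → ℕ,
    eval (0 : Fin d → ℝ) ((L k) ((dpow D k) (q n))) =
      if k = n then natFact n else 0

namespace Aux

variable {d : ℕ}

def ev0 {d : ℕ} : MvP d →ₗ[ℝ] ℝ := (aeval (0 : Fin d → ℝ) : MvP d →ₐ[ℝ] ℝ).toLinearMap

lemma aeval_eq_eval' (x : Fin d → ℝ) (g : MvP d) : aeval x g = eval x g := by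
  rw [← MvPolynomial.coe_aeval_eq_eval]; rfl

lemma ev0_apply (f : MvP d) : ev0 f = eval (0 : Fin d → ℝ) f := by
  simp [ev0, aeval_eq_eval']

lemma eval0_shiftOp (v : Fin d → ℝ) (f : MvP d) :
    eval (0 : Fin d → ℝ) (shiftOp v f) = eval v f := by
  have h := MvPolynomial.comp_aeval (fun i : Fin d => X i + C (v i))
      (aeval (0 : Fin d → ℝ) : MvP d →ₐ[ℝ] ℝ)
  have h2 : (aeval (fun i : Fin d => (aeval (0 : Fin d → ℝ)) (X i + C (v i))) : MvP d →ₐ[ℝ] ℝ)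
      = aeval (v : Fin d → ℝ) := by
    congr 1
    funext i
    simp
  rw [h2] at h
  have h3 := congrArg (fun φ : MvP d →ₐ[ℝ] ℝ => φ f) h
  simp only [AlgHom.comp_apply] at h3
  rw [aeval_eq_eval', aeval_eq_eval'] at h3
  simpa [shiftOp] using h3

lemma shiftInv_one {L : Module.End ℝ (MvP d)} (h : ShiftInv L) :
    L 1 = C (eval (0 : Fin d → ℝ) (L 1)) := by
  have h1 : ∀ v, shiftOp v (L 1) = L 1 := by
    intro v
    have := congrArg (fun T : Module.End ℝ (MvP d) => T 1) (h v)
    simp only [Module.End.mul_apply] at this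
    have hone : shiftOp v (1 : MvP d) = 1 := by
      simp [shiftOp]
    rw [hone] at this
    exact this.symm
  apply MvPolynomial.funext
  intro x
  rw [eval_C, ← eval0_shiftOp x (L 1), h1 x]


variable {D : Fin d → Module.End ℝ (MvP d)}

lemma dpow_zero (D : Fin d → Module.End ℝ (MvP d)) : dpow D 0 = 1 := by
  unfold dpow
  have : (List.ofFn fun i : Fin d => D i ^ ((0 : Fin d → ℕ) i)) = List.replicate d 1 := by
    simp [List.ofFn_const]
  rw [this, List.prod_replicate, one_pow]

lemma dpow_truncate (D : Fin d → Module.End ℝ (MvP d)) (k : Fin d → ℕ) (j : Fin d)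
    (hj : ∀ i, j < i → k i = 0) :
    dpow D k = ((List.ofFn fun i => D i ^ k i).take ((j : ℕ) + 1)).prod := by
  rw [show dpow D k = (List.ofFn fun i => D i ^ k i).prod from rfl]
  set l := List.ofFn fun i => D i ^ k i with hl
  conv_lhs => rw [← List.take_append_drop ((j : ℕ)+1) l]
  rw [List.prod_append]
  have hdrop : (l.drop ((j : ℕ)+1)).prod = 1 := by
    apply List.prod_eq_one
    intro x hx
    rw [List.mem_iff_getElem] at hx
    obtain ⟨i, hi, rfl⟩ := hx
    simp only [List.getElem_drop, hl, List.getElem_ofFn]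
    have hlen : (j : ℕ) + 1 + i < d := by
      have := hi
      simp [hl] at this
      omega
    have : k ⟨(j : ℕ) + 1 + i, hlen⟩ = 0 := by
      apply hj
      simp only [Fin.lt_def]
      omega
    simp [this]
  rw [hdrop, mul_one]

lemma dpow_peel (D : Fin d → Module.End ℝ (MvP d)) (k : Fin d → ℕ) (j : Fin d)
    (hj1 : k j ≠ 0) (hj : ∀ i, j < i → k i = 0) :
    dpow D k = dpow D (k - (Pi.single j 1 : Fin d → ℕ)) * D j := by
  have hk' : ∀ i, j < i → ((k - (Pi.single j 1 : Fin d → ℕ) : Fin d → ℕ)) i = 0 := by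
    intro i hi
    have h0 := hj i hi
    simp [Pi.sub_apply, h0]
  rw [dpow_truncate D k j hj, dpow_truncate D _ j hk']
  have hlen1 : (j : ℕ) < (List.ofFn fun i => D i ^ k i).length := by simp
  have hlen2 : (j : ℕ) < (List.ofFn fun i => D i ^ ((k - (Pi.single j 1 : Fin d → ℕ)) i)).length := by simp
  rw [List.prod_take_succ _ _ hlen1, List.prod_take_succ _ _ hlen2]
  have htake : (List.ofFn fun i => D i ^ k i).take (j : ℕ)
      = (List.ofFn fun i => D i ^ ((k - (Pi.single j 1 : Fin d → ℕ)) i)).take (j : ℕ) := by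
    apply List.ext_getElem (by simp)
    intro m h1 h2
    have hmd : m < d := by simp [List.length_take] at h1; omega
    have hmj : m < (j : ℕ) := by simp [List.length_take] at h1; omega
    rw [List.getElem_take, List.getElem_take, List.getElem_ofFn, List.getElem_ofFn]
    have hne : (⟨m, hmd⟩ : Fin d) ≠ j := by
      intro hc
      rw [Fin.ext_iff] at hc
      simp at hc
      omega
    congr 1
    simp [Pi.sub_apply, Pi.single_eq_of_ne hne]
  rw [← htake]
  simp only [List.getElem_ofFn]
  obtain ⟨m, hm⟩ : ∃ m, k j = m + 1 := ⟨k j - 1, by omega⟩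
  have h1 : (k - (Pi.single j 1 : Fin d → ℕ)) j = m := by simp [Pi.sub_apply, hm]
  have hjcast : (⟨(j : ℕ), by simpa using hlen1⟩ : Fin d) = j := by
    apply Fin.ext; rfl
  rw [hjcast, h1, hm, pow_succ, mul_assoc]


lemma desc_step (a b : ℕ) (hb : 1 ≤ b) :
    (a : ℝ) * ((a - 1).descFactorial (b - 1) : ℕ) = (a.descFactorial b : ℕ) := by
  obtain ⟨t, rfl⟩ : ∃ t, b = t + 1 := ⟨b - 1, by omega⟩
  cases a with
  | zero => simp [Nat.descFactorial]
  | succ m =>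
    simp only [Nat.succ_sub_one, Nat.add_sub_cancel, Nat.succ_descFactorial_succ]
    push_cast
    ring

lemma dpow_apply_basic {p : (Fin d → ℕ) → MvP d}
    (hp4 : ∀ (n : Fin d → ℕ) (i : Fin d), D i (p n) = ((n i : ℝ)) • p (n - Pi.single i 1))
    (k n : Fin d → ℕ) :
    dpow D k (p n) = (∏ i, ((n i).descFactorial (k i) : ℝ)) • p (n - k) := by
  suffices H : ∀ (N : ℕ) (k : Fin d → ℕ), ∑ i, k i = N → ∀ n,
      dpow D k (p n) = (∏ i, ((n i).descFactorial (k i) : ℝ)) • p (n - k) from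
    H _ k rfl n
  clear k n
  intro N
  induction N using Nat.strong_induction_on with
  | _ N IH =>
    intro k hk n
    by_cases h0 : k = 0
    · subst h0
      simp [dpow_zero D, Nat.descFactorial]
    · have hex : (Finset.univ.filter fun i => k i ≠ 0).Nonempty := by
        rcases Function.ne_iff.mp h0 with ⟨j, hj⟩
        refine ⟨j, ?_⟩
        simp only [Finset.mem_filter, Finset.mem_univ, true_and]
        simpa using hj
      set j := (Finset.univ.filter fun i => k i ≠ 0).max' hex with hjdef
      have hj1 : k j ≠ 0 := by
        have := (Finset.univ.filter fun i => k i ≠ 0).max'_mem hex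
        simpa using this
      have hj2 : ∀ i, j < i → k i = 0 := by
        intro i hi
        by_contra hne
        have : i ∈ Finset.univ.filter fun i => k i ≠ 0 := by simp [hne]
        have := Finset.le_max' _ i this
        exact absurd (lt_of_lt_of_le hi this) (lt_irrefl _)
      rw [dpow_peel D k j hj1 hj2, Module.End.mul_apply, hp4 n j, map_smul]
      have hsum : ∑ i, (k - (Pi.single j 1 : Fin d → ℕ)) i < N := by
        rw [← hk]
        apply Finset.sum_lt_sum
        · intro i _
          rcases eq_or_ne i j with rfl | hne
          · simp [Pi.sub_apply]
          · simp [Pi.sub_apply, Pi.single_eq_of_ne hne]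
        · exact ⟨j, Finset.mem_univ j, by simp [Pi.sub_apply]; omega⟩
      rw [IH _ hsum _ rfl]
      have hidx : n - (Pi.single j 1 : Fin d → ℕ) - (k - (Pi.single j 1 : Fin d → ℕ)) = n - k := by
        funext i
        rcases eq_or_ne i j with rfl | hne
        · simp [Pi.sub_apply]
          omega
        · simp [Pi.sub_apply, Pi.single_eq_of_ne hne]
      rw [hidx, smul_smul]
      congr 1
      rw [Finset.prod_eq_mul_prod_sdiff_singleton_of_mem (Finset.mem_univ j),
          Finset.prod_eq_mul_prod_sdiff_singleton_of_mem (Finset.mem_univ j)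
            (fun i => ((n i).descFactorial (k i) : ℝ)), ← mul_assoc]
      congr 1
      · have : (n - (Pi.single j 1 : Fin d → ℕ)) j = n j - 1 := by simp [Pi.sub_apply]
        have h2 : (k - (Pi.single j 1 : Fin d → ℕ)) j = k j - 1 := by simp [Pi.sub_apply]
        rw [this, h2]
        exact desc_step (n j) (k j) (by omega)
      · apply Finset.prod_congr rfl
        intro i hi
        have hne : i ≠ j := by simpa using (Finset.mem_sdiff.mp hi).2
        simp [Pi.sub_apply, Pi.single_eq_of_ne hne]


lemma natFact_pos (n : Fin d → ℕ) : 0 < natFact n :=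
  Finset.prod_pos fun i _ => by exact_mod_cast Nat.factorial_pos (n i)

lemma sum_pos_of_ne_zero {m : Fin d → ℕ} (hm : m ≠ 0) : 1 ≤ ∑ i, m i := by
  rcases Function.ne_iff.mp hm with ⟨j, hj⟩
  have hj' : 1 ≤ m j := by simpa [Nat.one_le_iff_ne_zero] using hj
  calc 1 ≤ m j := hj'
  _ ≤ ∑ i, m i := Finset.single_le_sum (fun i _ => Nat.zero_le _) (Finset.mem_univ j)

variable {p : (Fin d → ℕ) → MvP d}

lemma eval0_p (hp : IsBasicSeq D p) (m : Fin d → ℕ) :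
    eval (0 : Fin d → ℝ) (p m) = if m = 0 then 1 else 0 := by
  split_ifs with h
  · subst h; rw [hp.2.1]; simp
  · exact hp.2.2.1 m (sum_pos_of_ne_zero h)

lemma psi_p (hp : IsBasicSeq D p) (m n : Fin d → ℕ) :
    eval (0 : Fin d → ℝ) (dpow D m (p n)) = if m = n then natFact m else 0 := by
  rw [dpow_apply_basic hp.2.2.2, smul_eq_C_mul, eval_mul, eval_C]
  by_cases hmn : m = n
  · subst hmn
    have h1 : m - m = 0 := by funext i; simp
    rw [h1, eval0_p hp, if_pos rfl, if_pos rfl]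
    simp [natFact, Nat.descFactorial_self]
  · rw [if_neg hmn]
    by_cases hle : m ≤ n
    · have hsub : n - m ≠ 0 := by
        intro hc
        apply hmn
        funext i
        have h1 := congrFun hc i
        have h2 : m i ≤ n i := hle i
        simp only [Pi.sub_apply, Pi.zero_apply] at h1
        omega
      rw [eval0_p hp, if_neg hsub, mul_zero]
    · have hle' : ∃ i, n i < m i := by
        by_contra hc
        push_neg at hc
        exact hle fun i => hc i
      rcases hle' with ⟨i, hi⟩
      have : (n i).descFactorial (m i) = 0 :=
        Nat.descFactorial_eq_zero_iff_lt.mpr hi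
      rw [Finset.prod_eq_zero (Finset.mem_univ i) (by exact_mod_cast congrArg (Nat.cast : ℕ → ℝ) this), zero_mul]

lemma dpow_p_notle (hp : IsBasicSeq D p) {m n : Fin d → ℕ} (h : ¬ m ≤ n) :
    dpow D m (p n) = 0 := by
  rw [dpow_apply_basic hp.2.2.2]
  have hle' : ∃ i, n i < m i := by
    by_contra hc
    push_neg at hc
    exact h fun i => hc i
  rcases hle' with ⟨i, hi⟩
  have : (n i).descFactorial (m i) = 0 :=
    Nat.descFactorial_eq_zero_iff_lt.mpr hi
  rw [Finset.prod_eq_zero (Finset.mem_univ i) (by exact_mod_cast congrArg (Nat.cast : ℕ → ℝ) this), zero_smul]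

lemma dpow_p_diag (hp : IsBasicSeq D p) (n : Fin d → ℕ) :
    dpow D n (p n) = natFact n • (1 : MvP d) := by
  rw [dpow_apply_basic hp.2.2.2]
  have h1 : n - n = 0 := by funext i; simp
  rw [h1, hp.2.1]
  congr 1
  simp [natFact, Nat.descFactorial_self]

lemma p_linearIndependent (hp : IsBasicSeq D p) : LinearIndependent ℝ p := by
  rw [linearIndependent_iff']
  intro s g hsum i hi
  have F : MvP d →ₗ[ℝ] ℝ := ev0 ∘ₗ (dpow D i)
  have h1 : (ev0 ∘ₗ (dpow D i)) (∑ k ∈ s, g k • p k) = 0 := by rw [hsum]; simp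
  rw [map_sum] at h1
  simp only [LinearMap.comp_apply, map_smul, ev0_apply, smul_eq_mul] at h1
  have h2 : ∀ k ∈ s, k ≠ i → g k * eval (0 : Fin d → ℝ) (dpow D i (p k)) = 0 := by
    intro k _ hk
    rw [psi_p hp, if_neg (Ne.symm hk), mul_zero]
  rw [Finset.sum_eq_single_of_mem i hi (fun k hks hk => h2 k hks hk)] at h1
  rw [psi_p hp, if_pos rfl] at h1
  rcases mul_eq_zero.mp h1 with h | h
  · exact h
  · exact absurd h (ne_of_gt (natFact_pos i))

lemma p_span (hp : IsBasicSeq D p) (f : MvP d) :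
    f ∈ Submodule.span ℝ (Set.range p) := by
  classical
  set N := f.totalDegree with hN
  set T : Set (Fin d → ℕ) := {k | ∑ i, k i ≤ N} with hT
  have hTfin : T.Finite := by
    apply (Set.finite_Iic (fun _ => N : Fin d → ℕ)).subset
    intro k hk
    intro i
    calc k i ≤ ∑ j, k j := Finset.single_le_sum (fun j _ => Nat.zero_le _) (Finset.mem_univ i)
    _ ≤ N := hk
  haveI : Fintype T := hTfin.fintype
  set s : Set ((Fin d) →₀ ℕ) := {u | (u.sum fun _ e => e) ≤ N} with hs
  have hequiv : s ≃ T := by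
    apply Equiv.subtypeEquiv (Finsupp.equivFunOnFinite (α := Fin d) (M := ℕ))
    intro u
    have : (u.sum fun _ e => e) = ∑ i, u i := Finsupp.sum_fintype u _ (fun _ => rfl)
    simp [hs, hT, this, Finsupp.equivFunOnFinite]
  haveI : Fintype s := Fintype.ofEquiv T hequiv.symm
  have hrank : Module.finrank ℝ (restrictTotalDegree (Fin d) ℝ N) = Fintype.card T := by
    have hid : restrictTotalDegree (Fin d) ℝ N = restrictSupport ℝ s := rfl
    rw [hid, Module.finrank_eq_card_basis (basisRestrictSupport ℝ s), Fintype.card_congr hequiv]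
  set v : T → restrictTotalDegree (Fin d) ℝ N := fun k =>
    ⟨p k, (mem_restrictTotalDegree _ _ _).mpr (by rw [hp.1]; exact k.2)⟩ with hv
  have hvli : LinearIndependent ℝ v := by
    apply LinearIndependent.of_comp (restrictTotalDegree (Fin d) ℝ N).subtype
    have : ((restrictTotalDegree (Fin d) ℝ N).subtype ∘ v) = p ∘ (Subtype.val : T → (Fin d → ℕ)) := rfl
    rw [this]
    exact (p_linearIndependent hp).comp _ Subtype.val_injective
  haveI : Nonempty T := ⟨⟨0, by simp [hT]⟩⟩
  have hmem : (⟨f, (mem_restrictTotalDegree _ _ _).mpr le_rfl⟩ :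
      restrictTotalDegree (Fin d) ℝ N) ∈ Submodule.span ℝ (Set.range v) := by
    have hco : Set.range v
        = Set.range ⇑(basisOfLinearIndependentOfCardEqFinrank hvli hrank.symm) := by
      rw [coe_basisOfLinearIndependentOfCardEqFinrank]
    rw [hco, Module.Basis.span_eq]
    exact Submodule.mem_top
  have := Submodule.mem_map_of_mem (f := (restrictTotalDegree (Fin d) ℝ N).subtype) hmem
  rw [Submodule.map_span] at this
  have himg : ((restrictTotalDegree (Fin d) ℝ N).subtype '' Set.range v) ⊆ Set.range p := by
    rintro x ⟨y, ⟨k, rfl⟩, rfl⟩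
    exact ⟨k, rfl⟩
  exact Submodule.span_mono himg this


variable {L : (Fin d → ℕ) → Module.End ℝ (MvP d)}

/-- The functional `Φ_m` as a linear map into `ℝ`. -/
def Gmap (D : Fin d → Module.End ℝ (MvP d)) (L : (Fin d → ℕ) → Module.End ℝ (MvP d))
    (m : Fin d → ℕ) : MvP d →ₗ[ℝ] ℝ :=
  ev0 ∘ₗ ((L m) ∘ₗ (dpow D m))

lemma Gmap_apply (m : Fin d → ℕ) (x : MvP d) :
    Gmap D L m x = eval (0 : Fin d → ℝ) (L m (dpow D m x)) := by
  simp [Gmap, ev0_apply]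

lemma L_one_ne (hL : ∀ n, ShiftInv (L n) ∧ (L n) (1 : MvP d) ≠ 0) (m : Fin d → ℕ) :
    eval (0 : Fin d → ℝ) (L m 1) ≠ 0 := by
  intro hc
  have h1 := shiftInv_one (hL m).1
  rw [hc] at h1
  simp at h1
  exact (hL m).2 h1

lemma Gmap_p_notle (hp : IsBasicSeq D p) {m k : Fin d → ℕ} (h : ¬ m ≤ k) :
    Gmap D L m (p k) = 0 := by
  rw [Gmap_apply, dpow_p_notle hp h, map_zero, map_zero]

lemma Gmap_p_diag (hp : IsBasicSeq D p) (m : Fin d → ℕ) :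
    Gmap D L m (p m) = natFact m * eval (0 : Fin d → ℝ) (L m 1) := by
  rw [Gmap_apply, dpow_p_diag hp, map_smul]
  rw [smul_eq_C_mul, eval_mul, eval_C]

lemma Gmap_diag_ne (hp : IsBasicSeq D p)
    (hL : ∀ n, ShiftInv (L n) ∧ (L n) (1 : MvP d) ≠ 0) (m : Fin d → ℕ) :
    Gmap D L m (p m) ≠ 0 := by
  rw [Gmap_p_diag hp]
  exact mul_ne_zero (ne_of_gt (natFact_pos m)) (L_one_ne hL m)

lemma separation (hp : IsBasicSeq D p)
    (hL : ∀ n, ShiftInv (L n) ∧ (L n) (1 : MvP d) ≠ 0) (r : MvP d)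
    (hr : ∀ k, Gmap D L k r = 0) : r = 0 := by
  classical
  obtain ⟨c, hc⟩ := Finsupp.mem_span_range_iff_exists_finsupp.mp (p_span hp r)
  suffices hcz : c = 0 by rw [← hc, hcz]; simp
  by_contra hc0
  obtain ⟨m0, hm0⟩ := Finsupp.support_nonempty_iff.mpr hc0
  obtain ⟨m, -, hmax⟩ := Finset.exists_le_maximal _ hm0
  have hGr : Gmap D L m r = 0 := hr m
  rw [← hc, map_finsuppSum] at hGr
  have hsum : (c.sum fun k a => Gmap D L m (a • p k))
      = ∑ k ∈ c.support, c k * Gmap D L m (p k) := by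
    apply Finset.sum_congr rfl
    intro k _
    simp
  rw [hsum] at hGr
  rw [Finset.sum_eq_single_of_mem m hmax.1] at hGr
  · rcases mul_eq_zero.mp hGr with h | h
    · exact (Finsupp.mem_support_iff.mp hmax.1) h
    · exact Gmap_diag_ne hp hL m h
  · intro k hk hkm
    by_cases hmk : m ≤ k
    · exact absurd (le_antisymm (hmax.2 hk hmk) hmk) (Ne.symm (by exact fun h => hkm (by rw [h])))
    · rw [Gmap_p_notle hp hmk, mul_zero]

lemma totalDegree_smul_le (a : ℝ) (f : MvP d) : (a • f).totalDegree ≤ f.totalDegree := by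
  rw [smul_eq_C_mul]
  refine (totalDegree_mul _ _).trans ?_
  simp [totalDegree_C]

lemma totalDegree_smul_eq {a : ℝ} (ha : a ≠ 0) (f : MvP d) :
    (a • f).totalDegree = f.totalDegree := by
  refine le_antisymm (totalDegree_smul_le a f) ?_
  have : f = a⁻¹ • (a • f) := by rw [smul_smul, inv_mul_cancel₀ ha, one_smul]
  conv_lhs => rw [this]
  exact totalDegree_smul_le _ _

lemma exists_good (hp : IsBasicSeq D p)
    (hL : ∀ n, ShiftInv (L n) ∧ (L n) (1 : MvP d) ≠ 0) (n : Fin d → ℕ) :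
    ∃ t : MvP d,
      (∀ m, Gmap D L m t = if m = n then natFact n else 0) ∧
      t.totalDegree = ∑ i, n i ∧ t ∈ Pin p n := by
  classical
  set S : Finset (Fin d → ℕ) := Finset.Iic n with hS
  have hnS : n ∈ S := by simp [hS]
  set A : Matrix S S ℝ := fun m k => Gmap D L (m : Fin d → ℕ) (p (k : Fin d → ℕ)) with hA
  have hAkey : ∀ cv : S → ℝ, A.mulVec cv = 0 → cv = 0 := by
    intro cv hcv
    by_contra hcv0
    have hne : (Finset.univ.filter fun k : S => cv k ≠ 0).Nonempty := by
      rcases Function.ne_iff.mp hcv0 with ⟨k0, hk0⟩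
      exact ⟨k0, by simp only [Finset.mem_filter, Finset.mem_univ, true_and]; simpa using hk0⟩
    obtain ⟨k0, hk0mem⟩ := hne
    obtain ⟨m, -, hmax⟩ := Finset.exists_le_maximal _ hk0mem
    have hmsupp : cv m ≠ 0 := by
      have := hmax.1
      simpa using this
    have h0 : ∑ k, A m k * cv k = 0 := by
      have := congrFun hcv m
      simpa [Matrix.mulVec, dotProduct] using this
    rw [Finset.sum_eq_single_of_mem m (Finset.mem_univ m)] at h0
    · rcases mul_eq_zero.mp h0 with h | h
      · exact Gmap_diag_ne hp hL _ h
      · exact hmsupp h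
    · intro k _ hkm
      by_cases hck : cv k = 0
      · rw [hck, mul_zero]
      · have hkmem : k ∈ Finset.univ.filter fun k : S => cv k ≠ 0 := by
          simp only [Finset.mem_filter, Finset.mem_univ, true_and]
          exact hck
        by_cases hmk : (m : Fin d → ℕ) ≤ (k : Fin d → ℕ)
        · have hmk' : m ≤ k := hmk
          have := le_antisymm (hmax.2 hkmem hmk') hmk'
          exact absurd this hkm
        · rw [hA]
          simp only
          rw [Gmap_p_notle hp hmk, zero_mul]
  have hinj : Function.Injective (Matrix.mulVecLin A) := by
    intro a b hab
    have : A.mulVec (a - b) = 0 := by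
      have h1 : Matrix.mulVecLin A (a - b) = 0 := by rw [map_sub, hab, sub_self]
      simpa [Matrix.mulVecLin_apply] using h1
    have := hAkey _ this
    exact sub_eq_zero.mp this
  have hsurj := (LinearMap.injective_iff_surjective).mp hinj
  obtain ⟨cv, hcv⟩ := hsurj (fun m : S => if (m : Fin d → ℕ) = n then natFact n else 0)
  rw [Matrix.mulVecLin_apply] at hcv
  refine ⟨∑ k : S, cv k • p (k : Fin d → ℕ), ?_, ?_, ?_⟩
  · intro m
    have hGsum : ∀ m' : Fin d → ℕ, Gmap D L m' (∑ k : S, cv k • p (k : Fin d → ℕ))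
        = ∑ k : S, cv k * Gmap D L m' (p (k : Fin d → ℕ)) := by
      intro m'
      rw [map_sum]
      apply Finset.sum_congr rfl
      intro k _
      rw [map_smul, smul_eq_mul]
    by_cases hm : m ≤ n
    · have hmS : m ∈ S := by simp [hS, hm]
      have h1 : ∑ k, A ⟨m, hmS⟩ k * cv k = if m = n then natFact n else 0 := by
        have := congrFun hcv ⟨m, hmS⟩
        simpa [Matrix.mulVec, dotProduct] using this
      rw [hGsum]
      rw [← h1]
      apply Finset.sum_congr rfl
      intro k _
      rw [mul_comm]
    · have hmn : m ≠ n := fun h => hm (le_of_eq h)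
      rw [if_neg hmn, hGsum]
      apply Finset.sum_eq_zero
      intro k _
      have hk : (k : Fin d → ℕ) ≤ n := by
        exact Finset.mem_Iic.mp k.2
      have : ¬ m ≤ (k : Fin d → ℕ) := fun h => hm (le_trans h hk)
      rw [Gmap_p_notle hp this, mul_zero]
  · -- total degree
    have hcn : cv ⟨n, hnS⟩ ≠ 0 := by
      have h1 : ∑ k, A ⟨n, hnS⟩ k * cv k = natFact n := by
        have := congrFun hcv ⟨n, hnS⟩
        simpa [Matrix.mulVec, dotProduct] using this
      rw [Finset.sum_eq_single_of_mem ⟨n, hnS⟩ (Finset.mem_univ _)] at h1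
      · intro hc
        rw [hc, mul_zero] at h1
        exact (ne_of_gt (natFact_pos n)) h1.symm
      · intro k _ hkn
        have hk : (k : Fin d → ℕ) ≤ n := Finset.mem_Iic.mp k.2
        have hne : (k : Fin d → ℕ) ≠ n := fun h => hkn (Subtype.ext h)
        have : ¬ (n : Fin d → ℕ) ≤ (k : Fin d → ℕ) := by
          intro h
          exact hne (le_antisymm hk h)
        rw [hA]
        simp only
        rw [Gmap_p_notle hp this, zero_mul]
    rw [← Finset.add_sum_erase _ _ (Finset.mem_univ (⟨n, hnS⟩ : S))]
    have hdeg_head : (cv ⟨n, hnS⟩ • p n).totalDegree = ∑ i, n i := by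
      rw [totalDegree_smul_eq hcn, hp.1]
    by_cases hzero : ∑ i, n i = 0
    · have hn0 : n = 0 := by
        funext i
        have : ∀ j ∈ Finset.univ, n j = 0 := Finset.sum_eq_zero_iff.mp hzero
        exact this i (Finset.mem_univ i)
      have hrest : ∑ k ∈ Finset.univ.erase (⟨n, hnS⟩ : S), cv k • p (k : Fin d → ℕ) = 0 := by
        apply Finset.sum_eq_zero
        intro k hk
        exfalso
        have hkmem := Finset.mem_erase.mp hk
        apply hkmem.1
        apply Subtype.ext
        have hkle : (k : Fin d → ℕ) ≤ n := Finset.mem_Iic.mp k.2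
        funext i
        have h1 : (k : Fin d → ℕ) i ≤ n i := hkle i
        have h2 : n i = 0 := congrFun hn0 i
        simp only
        omega
      rw [hrest, add_zero, hdeg_head]
    · have hpos : 0 < ∑ i, n i := Nat.pos_of_ne_zero hzero
      have hrest_lt : (∑ k ∈ Finset.univ.erase (⟨n, hnS⟩ : S),
          cv k • p (k : Fin d → ℕ)).totalDegree < ∑ i, n i := by
        refine lt_of_le_of_lt (totalDegree_finset_sum _ _) ?_
        rw [Finset.sup_lt_iff (by simpa using hpos)]
        intro k hk
        have hkmem := Finset.mem_erase.mp hk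
        have hkle : (k : Fin d → ℕ) ≤ n := Finset.mem_Iic.mp k.2
        have hkne : (k : Fin d → ℕ) ≠ n := fun h => hkmem.1 (Subtype.ext h)
        have hklt : ∑ i, (k : Fin d → ℕ) i < ∑ i, n i := by
          apply Finset.sum_lt_sum (fun i _ => hkle i)
          rcases Function.ne_iff.mp hkne with ⟨i, hi⟩
          exact ⟨i, Finset.mem_univ i, lt_of_le_of_ne (hkle i) hi⟩
        calc (cv k • p (k : Fin d → ℕ)).totalDegree
            ≤ (p (k : Fin d → ℕ)).totalDegree := totalDegree_smul_le _ _
        _ = ∑ i, (k : Fin d → ℕ) i := hp.1 _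
        _ < ∑ i, n i := hklt
      rw [totalDegree_add_eq_left_of_totalDegree_lt (by rw [hdeg_head]; exact hrest_lt), hdeg_head]
  · apply Submodule.sum_mem
    intro k _
    apply Submodule.smul_mem
    apply Submodule.subset_span
    exact ⟨(k : Fin d → ℕ), Finset.mem_Iic.mp k.2, rfl⟩

end Aux

/-- there is a unique family `(q_n)` biorthogonal to
`(Φ_n = L_n ∘ 𝔡^n)_{n}`, and it satisfies `deg q_n = |n|` and `q_n ∈ Π_n(Δ)`. -/
theorem exists_unique_biorthogonal_family {d : ℕ} (hd : 1 ≤ d)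
    (D : Fin d → Module.End ℝ (MvP d)) (hD : IsDeltaSystem D)
    (p : (Fin d → ℕ) → MvP d) (hp : IsBasicSeq D p)
    (L : (Fin d → ℕ) → Module.End ℝ (MvP d))
    (hL : ∀ n, ShiftInv (L n) ∧ (L n) (1 : MvP d) ≠ 0) :
    (∃! q : (Fin d → ℕ) → MvP d, Biorthogonal D L q) ∧
    (∀ q : (Fin d → ℕ) → MvP d, Biorthogonal D L q →
      ∀ n : Fin d → ℕ, (q n).totalDegree = ∑ i, n i ∧ q n ∈ Pin p n) := by
  classical
  choose Q hQG hQdeg hQmem using fun n => Aux.exists_good (D := D) (L := L) hp hL n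
  have hQbi : Biorthogonal D L Q := by
    intro k n
    have h := hQG n k
    rwa [Aux.Gmap_apply] at h
  have huniq : ∀ q, Biorthogonal D L q → q = Q := by
    intro q hq
    funext n
    have hz : ∀ k, Aux.Gmap D L k (q n - Q n) = 0 := by
      intro k
      rw [map_sub, Aux.Gmap_apply, Aux.Gmap_apply, hq k n, hQbi k n, sub_self]
    have h := Aux.separation hp hL _ hz
    exact sub_eq_zero.mp h
  refine ⟨⟨Q, hQbi, huniq⟩, ?_⟩
  intro q hq n
  rw [huniq q hq]
  exact ⟨hQdeg n, hQmem n⟩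


end
end

section
/- Let Δ = (𝔡₁,…,𝔡_d) be a system of delta operators on ℝ[x₁,…,x_d] with basic sequence (p_n)_{n∈ℕ^d}, and let Z = (z_k)_{k∈ℕ^d} be any family of points of ℝ^d. Then for every n ∈ ℕ^d there exists exactly one polynomial t_n ∈ Π_n(Δ) with (𝔡^k t_n)(z_k) = n!·δ_{k,n} for all k ≤ n (the delta Gončarov polynomial t_n(·;Z)). Moreover, if Z′ = (z′_k)_{k∈ℕ^d} is another family of points with z′_k = z_k for all k ≤ n, then t_n(·;Z′) = t_n(·;Z). -/
open MvPolynomial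

noncomputable section

namespace GAux
variable {d : ℕ} {D : Fin d → Module.End ℝ (MvP d)} {p : (Fin d → ℕ) → MvP d}

lemma pow_on_basic (hp : IsBasicSeq D p) (i : Fin d) (j : ℕ) (m : Fin d → ℕ) :
    ((D i) ^ j) (p m) = (((m i).descFactorial j : ℕ) : ℝ) • p (m - Pi.single i j) := by
  induction j with
  | zero => simp
  | succ j ih =>
    rw [pow_succ', Module.End.mul_apply, ih, map_smul, hp.2.2.2]
    rw [smul_smul]
    have h1 : ((m - Pi.single i j : Fin d → ℕ)) i = m i - j := by
      simp [Pi.sub_apply]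
    have h2 : (m - Pi.single i j - Pi.single i 1 : Fin d → ℕ)
        = m - Pi.single i (j+1) := by
      funext x
      by_cases hx : x = i
      · subst hx; simp [Pi.sub_apply]; omega
      · simp [Pi.sub_apply, Pi.single_eq_of_ne hx]
    rw [h1, h2, Nat.descFactorial_succ]
    push_cast
    ring

lemma list_on_basic (hp : IsBasicSeq D p) (k m : Fin d → ℕ) :
    ∀ l : List (Fin d), l.Nodup →
    ((l.map fun i => (D i) ^ (k i)).prod) (p m)
      = (((l.map fun i => (m i).descFactorial (k i)).prod : ℕ) : ℝ)
        • p (fun j => if j ∈ l then m j - k j else m j) := by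
  intro l
  induction l with
  | nil => intro _; simp
  | cons i l ih =>
    intro hnd
    rw [List.map_cons, List.prod_cons, Module.End.mul_apply,
      ih (List.nodup_cons.1 hnd).2, map_smul, pow_on_basic hp, List.map_cons,
      List.prod_cons, smul_smul]
    have hi : i ∉ l := (List.nodup_cons.1 hnd).1
    have h1 : (if i ∈ l then m i - k i else m i) = m i := by simp [hi]
    have h2 : ((fun j => if j ∈ l then m j - k j else m j) - Pi.single i (k i) : Fin d → ℕ)
        = fun j => if j ∈ (i :: l) then m j - k j else m j := by
      funext x
      by_cases hx : x = i
      · subst hx; simp [hi, Pi.sub_apply]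
      · simp [Pi.sub_apply, Pi.single_eq_of_ne hx, hx, List.mem_cons]
    rw [h1, h2]
    push_cast
    ring_nf

lemma dpow_basic (hp : IsBasicSeq D p) (k m : Fin d → ℕ) :
    dpow D k (p m) = ((∏ i, (m i).descFactorial (k i) : ℕ) : ℝ) • p (m - k) := by
  rw [dpow, List.ofFn_eq_map, list_on_basic hp k m _ (List.nodup_finRange d)]
  have h1 : (fun j => if j ∈ List.finRange d then m j - k j else m j) = m - k := by
    funext x; simp [List.mem_finRange, Pi.sub_apply]
  have h2 : ((List.finRange d).map fun i => (m i).descFactorial (k i)).prod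
      = ∏ i, (m i).descFactorial (k i) := by
    rw [← List.ofFn_eq_map, List.prod_ofFn]
  rw [h1, h2]

end GAux

section Main
open GAux
variable {d : ℕ} {D : Fin d → Module.End ℝ (MvP d)} {p : (Fin d → ℕ) → MvP d}

lemma dpow_self (hp : IsBasicSeq D p) (k : Fin d → ℕ) :
    dpow D k (p k) = ((∏ i, (k i).factorial : ℕ) : ℝ) • (1 : MvP d) := by
  rw [dpow_basic hp]
  have h1 : k - k = (0 : Fin d → ℕ) := by funext i; simp [Pi.sub_apply]
  simp [h1, hp.2.1, Nat.descFactorial_self]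

lemma dpow_not_le (hp : IsBasicSeq D p) {k m : Fin d → ℕ} (h : ¬ k ≤ m) :
    dpow D k (p m) = 0 := by
  rw [dpow_basic hp]
  rw [Pi.le_def] at h; push_neg at h
  obtain ⟨i, hi⟩ := h
  have : ∏ i, (m i).descFactorial (k i) = 0 :=
    Finset.prod_eq_zero (Finset.mem_univ i)
      (Nat.descFactorial_eq_zero_iff_lt.2 (by omega))
  simp [this]

variable (D p) in
/-- The matrix of the evaluation functionals against the basic sequence. -/
def Emat (Z : (Fin d → ℕ) → (Fin d → ℝ)) (n : Fin d → ℕ) :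
    Matrix {x // x ∈ Finset.Iic n} {x // x ∈ Finset.Iic n} ℝ :=
  fun k m => eval (Z (k : Fin d → ℕ)) (dpow D (k : Fin d → ℕ) (p (m : Fin d → ℕ)))

lemma emat_ker (hp : IsBasicSeq D p) (Z : (Fin d → ℕ) → (Fin d → ℝ)) (n : Fin d → ℕ)
    (c : {x // x ∈ Finset.Iic n} → ℝ)
    (hc : ∀ k, ∑ m, Emat D p Z n k m * c m = 0) : c = 0 := by
  have key : ∀ N (k : {x // x ∈ Finset.Iic n}),
      (∑ i, (n i - (k : Fin d → ℕ) i)) < N → c k = 0 := by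
    intro N
    induction N with
    | zero => intro k hk; omega
    | succ N ih =>
      intro k hk
      have hz : ∀ m, m ≠ k → Emat D p Z n k m * c m = 0 := by
        intro m hm
        by_cases hle : (k : Fin d → ℕ) ≤ (m : Fin d → ℕ)
        · have hmn : (m : Fin d → ℕ) ≤ n := Finset.mem_Iic.1 m.2
          have hne : ∃ i, (k : Fin d → ℕ) i < (m : Fin d → ℕ) i := by
            by_contra hcon; push_neg at hcon
            exact hm (Subtype.ext (funext fun i => le_antisymm (hcon i) (hle i)))
          obtain ⟨i, hi⟩ := hne
          have hlt : (∑ i, (n i - (m : Fin d → ℕ) i)) < ∑ i, (n i - (k : Fin d → ℕ) i) := by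
            apply Finset.sum_lt_sum
            · intro j _; exact Nat.sub_le_sub_left (hle j) (n j)
            · refine ⟨i, Finset.mem_univ i, ?_⟩
              have h1 : (m : Fin d → ℕ) i ≤ n i := hmn i
              omega
          rw [ih m (by omega), mul_zero]
        · have h0 : Emat D p Z n k m = 0 := by
            rw [Emat, dpow_not_le hp hle, map_zero]
          rw [h0, zero_mul]
      have heq := hc k
      rw [Fintype.sum_eq_single k hz] at heq
      have hkk : Emat D p Z n k k = ((∏ i, ((k : Fin d → ℕ) i).factorial : ℕ) : ℝ) := by
        rw [Emat, dpow_self hp, smul_eval, map_one, mul_one]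
      rw [hkk] at heq
      have hfac : ((∏ i, ((k : Fin d → ℕ) i).factorial : ℕ) : ℝ) ≠ 0 := by
        rw [Nat.cast_ne_zero]
        exact Finset.prod_ne_zero_iff.2 fun i _ => Nat.factorial_ne_zero _
      exact (mul_eq_zero.1 heq).resolve_left hfac
  funext k
  exact key (∑ i, (n i - (k : Fin d → ℕ) i) + 1) k (by omega)

lemma emat_surj (hp : IsBasicSeq D p) (Z : (Fin d → ℕ) → (Fin d → ℝ)) (n : Fin d → ℕ)
    (b : {x // x ∈ Finset.Iic n} → ℝ) :
    ∃ c : {x // x ∈ Finset.Iic n} → ℝ, ∀ k, ∑ m, Emat D p Z n k m * c m = b k := by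
  have hmv : ∀ (c : {x // x ∈ Finset.Iic n} → ℝ) k,
      (Emat D p Z n).mulVecLin c k = ∑ m, Emat D p Z n k m * c m := by
    intro c k
    simp [Matrix.mulVecLin_apply, Matrix.mulVec, dotProduct]
  have hinj : Function.Injective ((Emat D p Z n).mulVecLin) := by
    rw [← LinearMap.ker_eq_bot, LinearMap.ker_eq_bot']
    intro c hc
    exact emat_ker hp Z n c (fun k => by rw [← hmv c k, hc]; rfl)
  obtain ⟨c, hcb⟩ := (LinearMap.injective_iff_surjective).1 hinj b
  exact ⟨c, fun k => by rw [← hmv c k, hcb]⟩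

end Main
section Final
open GAux
variable {d : ℕ} {D : Fin d → Module.End ℝ (MvP d)} {p : (Fin d → ℕ) → MvP d}
variable {Z : (Fin d → ℕ) → (Fin d → ℝ)} {n : Fin d → ℕ}

lemma eval_dpow_sum (c : {x // x ∈ Finset.Iic n} → ℝ) (k : Fin d → ℕ) :
    eval (Z k) (dpow D k (∑ m : {x // x ∈ Finset.Iic n}, c m • p (m : Fin d → ℕ)))
      = ∑ m : {x // x ∈ Finset.Iic n},
          eval (Z k) (dpow D k (p (m : Fin d → ℕ))) * c m := by
  rw [map_sum, map_sum]
  exact Finset.sum_congr rfl fun m _ => by rw [map_smul, smul_eval, mul_comm]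

lemma exists_g (hp : IsBasicSeq D p) : ∃ t, IsGoncarov D p Z n t := by
  obtain ⟨c, hc⟩ := emat_surj hp Z n
    (fun k => if (k : Fin d → ℕ) = n then natFact n else 0)
  refine ⟨∑ m : {x // x ∈ Finset.Iic n}, c m • p (m : Fin d → ℕ), ?_, ?_⟩
  · exact Submodule.sum_mem _ fun m _ => Submodule.smul_mem _ _
      (Submodule.subset_span ⟨m, Finset.mem_Iic.1 m.2, rfl⟩)
  · intro k hk
    have h := hc ⟨k, Finset.mem_Iic.2 hk⟩
    rw [eval_dpow_sum]
    simpa [Emat] using h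

lemma g_zero (hp : IsBasicSeq D p) {t : MvP d} (ht : t ∈ Pin p n)
    (h0 : ∀ k ≤ n, eval (Z k) (dpow D k t) = 0) : t = 0 := by
  obtain ⟨l, hlsup, hl⟩ := (Finsupp.mem_span_image_iff_linearCombination ℝ).1 ht
  have hsub : l.support ⊆ Finset.Iic n := by
    intro m hm
    exact Finset.mem_Iic.2 ((Finsupp.mem_supported ℝ l).1 hlsup hm)
  have hrep : t = ∑ m : {x // x ∈ Finset.Iic n}, l (m : Fin d → ℕ) • p (m : Fin d → ℕ) := by
    rw [← hl, Finsupp.linearCombination_apply, Finsupp.sum]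
    rw [Finset.sum_coe_sort (Finset.Iic n) (fun x => l x • p x)]
    exact Finset.sum_subset hsub fun x _ hx => by
      rw [Finsupp.notMem_support_iff.1 hx, zero_smul]
  have hker : (fun m : {x // x ∈ Finset.Iic n} => l (m : Fin d → ℕ)) = 0 := by
    refine emat_ker hp Z n _ fun k => ?_
    have h := h0 (k : Fin d → ℕ) (Finset.mem_Iic.1 k.2)
    rw [hrep, eval_dpow_sum] at h
    simpa [Emat] using h
  have hz : ∀ m : {x // x ∈ Finset.Iic n}, l (m : Fin d → ℕ) = 0 :=
    fun m => congrFun hker m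
  rw [hrep]
  exact Finset.sum_eq_zero fun m _ => by rw [hz m, zero_smul]

end Final

/-- for every grid `Z` and every `n` the delta Gončarov polynomial
`t_n(·;Z)` exists and is unique, and it only depends on the nodes `z_k`, `k ≤ n`. -/
theorem goncarov_exists_unique_and_local {d : ℕ} (hd : 1 ≤ d)
    (D : Fin d → Module.End ℝ (MvP d)) (hD : IsDeltaSystem D)
    (p : (Fin d → ℕ) → MvP d) (hp : IsBasicSeq D p)
    (Z Z' : (Fin d → ℕ) → (Fin d → ℝ)) (n : Fin d → ℕ) :
    (∃! t : MvP d, IsGoncarov D p Z n t) ∧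
    (∀ t t' : MvP d, IsGoncarov D p Z n t → IsGoncarov D p Z' n t' →
      (∀ k ≤ n, Z' k = Z k) → t' = t) := by
  have huniq : ∀ t t' : MvP d, IsGoncarov D p Z n t → IsGoncarov D p Z n t' → t' = t := by
    intro t t' h h'
    have hz : t' - t = 0 := by
      refine g_zero (Z := Z) hp (Submodule.sub_mem _ h'.1 h.1) fun k hk => ?_
      rw [map_sub, map_sub, h.2 k hk, h'.2 k hk, sub_self]
    exact sub_eq_zero.1 hz
  constructor
  · obtain ⟨t, ht⟩ := exists_g (Z := Z) (n := n) hp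
    exact ⟨t, ht, fun t' ht' => huniq t t' ht ht'⟩
  · intro t t' h h' hZZ
    have h'' : IsGoncarov D p Z n t' :=
      ⟨h'.1, fun k hk => by rw [← hZZ k hk]; exact h'.2 k hk⟩
    exact huniq t t' h h''

end
end

section
/- Let Δ = (𝔡₁,…,𝔡_d) be a system of delta operators on ℝ[x₁,…,x_d] with basic sequence (p_n)_{n∈ℕ^d}, let Z = (z_k)_{k∈ℕ^d} ⊆ ℝ^d be a grid, and let t_k(·;Z) be the associated delta Gončarov polynomials. Then for every n ∈ ℕ^d the identity p_n(x) = ∑_{k≤n} binom(n,k)·p_{n−k}(z_k)·t_k(x;Z) holds in ℝ[x₁,…,x_d]. -/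
open MvPolynomial

noncomputable section

section Aux

variable {d : ℕ} (D : Fin d → Module.End ℝ (MvP d)) (p : (Fin d → ℕ) → MvP d)
variable (hp4 : ∀ (n : Fin d → ℕ) (i : Fin d),
    D i (p n) = (n i : ℝ) • p (n - Pi.single i 1))

include hp4

private lemma dpow_single (i : Fin d) (j : ℕ) (m : Fin d → ℕ) :
    ((D i) ^ j) (p m) = ((m i).descFactorial j : ℝ) • p (m - Pi.single i j) := by
  induction j with
  | zero => simp
  | succ j ih =>
    rw [pow_succ', Module.End.mul_apply, ih, map_smul, hp4]
    have h1 : (m - (Pi.single i j : Fin d → ℕ)) i = m i - j := by simp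
    have h2 : m - Pi.single i j - Pi.single i 1 = m - Pi.single i (j + 1) := by
      funext s
      by_cases h : s = i
      · subst h; simp [tsub_tsub]
      · simp [Pi.single_eq_of_ne h]
    rw [h1, h2, smul_smul]
    congr 1
    rw [Nat.descFactorial_succ]
    push_cast
    ring

private lemma dpow_list (k : Fin d → ℕ) :
    ∀ l : List (Fin d), l.Nodup → ∀ m : Fin d → ℕ,
      ((l.map fun i => (D i) ^ (k i)).prod) (p m)
        = ((∏ i ∈ l.toFinset, ((m i).descFactorial (k i) : ℝ))) •
          p (m - fun j => if j ∈ l then k j else 0) := by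
  intro l
  induction l with
  | nil =>
    intro _ m
    rw [List.map_nil, List.prod_nil]
    have h0 : (m - fun j => if j ∈ ([] : List (Fin d)) then k j else 0) = m := by
      funext s; simp
    rw [h0]
    simp
  | cons i l ih =>
    intro hnd m
    have hil : i ∉ l := (List.nodup_cons.mp hnd).1
    rw [List.map_cons, List.prod_cons, Module.End.mul_apply,
      ih (List.nodup_cons.mp hnd).2, map_smul, dpow_single D p hp4]
    have h1 : (m - fun j => if j ∈ l then k j else 0) i = m i := by
      simp [hil]
    have h2 : (m - fun j => if j ∈ l then k j else 0) - Pi.single i (k i)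
        = m - fun j => if j ∈ (i :: l) then k j else 0 := by
      funext s
      by_cases h : s = i
      · subst h; simp [hil]
      · simp [Pi.single_eq_of_ne h, h]
    rw [h1, h2, smul_smul]
    congr 1
    rw [List.toFinset_cons, Finset.prod_insert (by simpa using hil)]
    ring

private lemma dpow_basic (k m : Fin d → ℕ) :
    dpow D k (p m) = ((∏ i, ((m i).descFactorial (k i) : ℝ))) • p (m - k) := by
  have h := dpow_list D p hp4 k (List.finRange d) (List.nodup_finRange d) m
  have e1 : (fun j => if j ∈ List.finRange d then k j else 0) = k := by
    funext j; simp [List.mem_finRange]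
  rw [List.toFinset_finRange, e1] at h
  rw [dpow, List.ofFn_eq_map, h]

private lemma dpow_basic_zero {k m : Fin d → ℕ} (hkm : ¬ k ≤ m) :
    dpow D k (p m) = 0 := by
  rw [dpow_basic D p hp4]
  obtain ⟨i, hi⟩ : ∃ i, m i < k i := by
    by_contra hcon
    push_neg at hcon
    exact hkm fun i => hcon i
  rw [Finset.prod_eq_zero (Finset.mem_univ i)
    (by exact_mod_cast Nat.descFactorial_eq_zero_iff_lt.mpr hi), zero_smul]

private lemma dpow_pin_zero {k j : Fin d → ℕ} (hkj : ¬ k ≤ j) {q : MvP d}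
    (hq : q ∈ Pin p j) : dpow D k q = 0 := by
  have hle : Pin p j ≤ LinearMap.ker (dpow D k) := by
    rw [Pin, Submodule.span_le]
    rintro _ ⟨m, hm, rfl⟩
    simp only [SetLike.mem_coe, LinearMap.mem_ker]
    apply dpow_basic_zero D p hp4
    intro hkm
    exact hkj (le_trans hkm hm)
  exact hle hq

private lemma uniq (hp2 : p 0 = 1) (Z : (Fin d → ℕ) → (Fin d → ℝ))
    (n : Fin d → ℕ) (c : (Fin d → ℕ) →₀ ℝ)
    (hsup : ∀ m ∈ c.support, m ≤ n)
    (h0 : ∀ k ≤ n, eval (Z k) (dpow D k (∑ m ∈ c.support, c m • p m)) = 0) :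
    c = 0 := by
  by_contra hc
  obtain ⟨m, hm, hmax⟩ := Finset.exists_max_image c.support (fun m => ∑ i, m i)
    (Finsupp.support_nonempty_iff.mpr hc)
  have h := h0 m (hsup m hm)
  rw [map_sum, map_sum] at h
  have hterm : ∀ m' ∈ c.support, m' ≠ m →
      eval (Z m) (dpow D m (c m' • p m')) = 0 := by
    intro m' hm' hne
    by_cases hle : m ≤ m'
    · exfalso
      have hlt : m < m' := lt_of_le_of_ne hle (Ne.symm hne)
      obtain ⟨hle', i, hi⟩ := Pi.lt_def.mp hlt
      have : ∑ i, m i < ∑ i, m' i :=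
        Finset.sum_lt_sum (fun i _ => hle' i) ⟨i, Finset.mem_univ i, hi⟩
      exact absurd (hmax m' hm') (not_le.mpr this)
    · rw [map_smul, dpow_basic_zero D p hp4 hle, smul_zero, map_zero]
  rw [Finset.sum_eq_single_of_mem m hm hterm] at h
  rw [map_smul, dpow_basic D p hp4, smul_eval, smul_eval] at h
  have hsub : m - m = 0 := by funext i; simp
  rw [hsub, hp2] at h
  simp only [Nat.descFactorial_self, map_one, mul_one] at h
  have hpos : (0 : ℝ) < ∏ i, ((m i).factorial : ℝ) :=
    Finset.prod_pos fun i _ => by exact_mod_cast (m i).factorial_pos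
  have : c m = 0 := by
    rcases mul_eq_zero.mp h with h' | h'
    · exact h'
    · exact absurd h' (ne_of_gt hpos)
  exact (Finsupp.mem_support_iff.mp hm) this

end Aux

/-- the linear recursion
`p_n(x) = ∑_{k ≤ n} binom(n,k) · p_{n-k}(z_k) · t_k(x;Z)`. -/
theorem basic_seq_goncarov_recursion {d : ℕ} (hd : 1 ≤ d)
    (D : Fin d → Module.End ℝ (MvP d)) (hD : IsDeltaSystem D)
    (p : (Fin d → ℕ) → MvP d) (hp : IsBasicSeq D p)
    (Z : (Fin d → ℕ) → (Fin d → ℝ))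
    (t : (Fin d → ℕ) → MvP d) (ht : ∀ k, IsGoncarov D p Z k (t k))
    (n : Fin d → ℕ) :
    p n = ∑ k ∈ Finset.Iic n,
      ((∏ i, ((n i).choose (k i) : ℝ)) * eval (Z k) (p (n - k))) • t k := by
  obtain ⟨hp1, hp2, hp3, hp4⟩ := hp
  set R : MvP d := ∑ k ∈ Finset.Iic n,
      ((∏ i, ((n i).choose (k i) : ℝ)) * eval (Z k) (p (n - k))) • t k with hR
  -- p n - R lies in Π_n
  have hmem : p n - R ∈ Pin p n := by
    apply Submodule.sub_mem
    · exact Submodule.subset_span ⟨n, show n ≤ n from le_rfl, rfl⟩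
    · apply Submodule.sum_mem
      intro k hk
      apply Submodule.smul_mem
      exact Submodule.span_mono
        (Set.image_mono fun m hm => le_trans hm (Finset.mem_Iic.mp hk)) (ht k).1
  -- the key vanishing property
  have hzero : ∀ k ≤ n, eval (Z k) (dpow D k (p n - R)) = 0 := by
    intro k hk
    have hA : eval (Z k) (dpow D k (p n))
        = (∏ i, ((n i).descFactorial (k i) : ℝ)) * eval (Z k) (p (n - k)) := by
      rw [dpow_basic D p hp4, smul_eval]
    have hBj : ∀ j ∈ Finset.Iic n, eval (Z k) (dpow D k (t j))
        = if j = k then natFact k else 0 := by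
      intro j _
      by_cases hkj : k ≤ j
      · rw [(ht j).2 k hkj]
        by_cases hjk : j = k
        · subst hjk; simp
        · rw [if_neg (fun h => hjk h.symm), if_neg hjk]
      · have hne : j ≠ k := fun h => hkj (h ▸ le_rfl)
        rw [dpow_pin_zero D p hp4 hkj (ht j).1, map_zero, if_neg hne]
    have hB : eval (Z k) (dpow D k R)
        = ((∏ i, ((n i).choose (k i) : ℝ)) * eval (Z k) (p (n - k))) * natFact k := by
      rw [hR, map_sum, map_sum]
      rw [Finset.sum_congr rfl (fun j hj => by
        rw [map_smul, smul_eval, hBj j hj, mul_ite, mul_zero])]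
      rw [Finset.sum_ite_eq' (Finset.Iic n) k, if_pos (Finset.mem_Iic.mpr hk)]
    rw [map_sub, map_sub, hA, hB, natFact]
    have : (∏ i, ((n i).descFactorial (k i) : ℝ))
        = (∏ i, ((n i).choose (k i) : ℝ)) * ∏ i, ((k i).factorial : ℝ) := by
      rw [← Finset.prod_mul_distrib]
      apply Finset.prod_congr rfl
      intro i _
      rw [Nat.descFactorial_eq_factorial_mul_choose]
      push_cast
      ring
    rw [this]
    ring
  -- express p n - R as a linear combination of basic polynomials
  rw [Pin, Finsupp.mem_span_image_iff_linearCombination] at hmem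
  obtain ⟨c, hcsup, hcq⟩ := hmem
  have hcq' : ∑ m ∈ c.support, c m • p m = p n - R := by
    rw [← hcq, Finsupp.linearCombination_apply, Finsupp.sum]
  have hc0 : c = 0 := by
    apply uniq D p hp4 hp2 Z n c
    · intro m hm
      exact (Finsupp.mem_supported ℝ c).mp hcsup hm
    · intro k hk
      rw [hcq']
      exact hzero k hk
  rw [hc0] at hcq'
  simp only [Finsupp.support_zero, Finset.sum_empty] at hcq'
  exact sub_eq_zero.mp hcq'.symm

end
end

section
/- Let Δ = (𝔡₁,…,𝔡_d) be a system of delta operators on ℝ[x₁,…,x_d] with basic sequence (p_n)_{n∈ℕ^d}, let Z = (z_k)_{k∈ℕ^d} ⊆ ℝ^d be a grid, and let (t_n(·;Z))_{n∈ℕ^d} be the associated delta Gončarov polynomials. Then (t_n(·;Z))_{n∈ℕ^d} is of binomial type — that is, t_0(·;Z), t_{e₁}(·;Z), …, t_{e_d}(·;Z) span the vector space of polynomials of total degree at most 1, and for every n ∈ ℕ^d the identity t_n(x+y;Z) = ∑_{k≤n} binom(n,k)·t_k(x;Z)·t_{n−k}(y;Z) holds in ℝ[x₁,…,x_d,y₁,…,y_d]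 — if and only if there exists a real d×d matrix A such that z_k = A·k for every k ∈ ℕ^d (k viewed as a column vector). -/
open MvPolynomial

noncomputable section

/-- A family `(q_n)_{n ∈ ℕ^d}` of polynomials is of binomial type:
`q_0, q_{e₁}, …, q_{e_d}` span the polynomials of total degree at most 1, and
`q_n(x+y) = ∑_{k ≤ n} binom(n,k)·q_k(x)·q_{n-k}(y)` in `ℝ[x₁,…,x_d,y₁,…,y_d]`
(the variables `x` are indexed by `Sum.inl`, the variables `y` by `Sum.inr`). -/
def IsBinomialType {d : ℕ} (q : (Fin d → ℕ) → MvP d) : Prop :=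
  Submodule.span ℝ (insert (q 0) (Set.range fun i : Fin d => q (Pi.single i 1))) =
    MvPolynomial.restrictTotalDegree (Fin d) ℝ 1 ∧
  ∀ n : Fin d → ℕ,
    (aeval fun i => (X (Sum.inl i) + X (Sum.inr i) : MvPolynomial (Fin d ⊕ Fin d) ℝ)) (q n) =
      ∑ k ∈ Finset.Iic n,
        (∏ i, ((n i).choose (k i) : ℝ)) •
          ((rename Sum.inl (q k)) * (rename Sum.inr (q (n - k))))

namespace Gon

variable {d : ℕ}

lemma aeval_eq_eval {σ : Type*} (x : σ → ℝ) (f : MvPolynomial σ ℝ) :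
    aeval x f = eval x f := by
  rw [aeval_eq_eval₂Hom]
  rfl

lemma eval_aeval {σ τ : Type*} (ξ : τ → ℝ) (F : σ → MvPolynomial τ ℝ)
    (f : MvPolynomial σ ℝ) :
    eval ξ (aeval F f) = eval (fun i => eval ξ (F i)) f := by
  have h : (aeval ξ : MvPolynomial τ ℝ →ₐ[ℝ] ℝ).comp (aeval F) =
      aeval (fun i => eval ξ (F i)) := by
    apply MvPolynomial.algHom_ext
    intro i
    simp [aeval_eq_eval]
  have := congrArg (fun φ : MvPolynomial σ ℝ →ₐ[ℝ] ℝ => φ f) h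
  simp only [AlgHom.comp_apply] at this
  rw [aeval_eq_eval, aeval_eq_eval] at this
  exact this

lemma shiftOp_apply (v : Fin d → ℝ) (f : MvP d) :
    shiftOp v f = aeval (fun i => X i + C (v i)) f := rfl

lemma eval_shiftOp (x v : Fin d → ℝ) (f : MvP d) :
    eval x (shiftOp v f) = eval (x + v) f := by
  rw [shiftOp_apply, eval_aeval]
  have : (fun i => eval x (X i + C (v i))) = x + v := by
    funext i; simp
  rw [this]

lemma dpow_shiftOp {D : Fin d → Module.End ℝ (MvP d)} (hD1 : ∀ i, ShiftInv (D i))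
    (k : Fin d → ℕ) (v : Fin d → ℝ) (f : MvP d) :
    dpow D k (shiftOp v f) = shiftOp v (dpow D k f) := by
  have h : Commute (dpow D k) (shiftOp v) := by
    apply Commute.list_prod_left
    intro x hx
    rw [List.mem_ofFn] at hx
    obtain ⟨i, rfl⟩ := hx
    exact (show Commute (D i) (shiftOp v) from hD1 i v).pow_left _
  calc dpow D k (shiftOp v f) = (dpow D k * shiftOp v) f := rfl
    _ = (shiftOp v * dpow D k) f := by rw [h]
    _ = shiftOp v (dpow D k f) := rfl

end Gon
namespace Gon

variable {d : ℕ} {D : Fin d → Module.End ℝ (MvP d)} {p : (Fin d → ℕ) → MvP d}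

lemma natFact_ne_zero (n : Fin d → ℕ) : natFact n ≠ 0 := by
  have : (0:ℝ) < natFact n := by
    apply Finset.prod_pos
    intro i _
    exact_mod_cast (n i).factorial_pos
  exact ne_of_gt this

lemma D_pow_p (hp : IsBasicSeq D p) (i : Fin d) (j : ℕ) (m : Fin d → ℕ) :
    (D i ^ j) (p m) = ((m i).descFactorial j : ℝ) • p (m - Pi.single i j) := by
  induction j generalizing m with
  | zero =>
    have h0 : m - Pi.single i 0 = m := by
      funext a
      simp [Pi.sub_apply]
    simp [h0]
  | succ j ih =>
    have h1 : (D i ^ (j+1)) (p m) = (D i ^ j) (D i (p m)) := by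
      rw [pow_succ]; rfl
    rw [h1, hp.2.2.2 m i, map_smul, ih (m - Pi.single i 1)]
    rw [smul_smul]
    congr 1
    · have hsub : ((m - Pi.single i 1 : Fin d → ℕ)) i = m i - 1 := by
        simp
      rw [hsub]
      rcases Nat.eq_zero_or_pos (m i) with h | h
      · simp [h]
      · have key : m i * ((m i - 1).descFactorial j) = (m i).descFactorial (j+1) := by
          obtain ⟨n', hn⟩ : ∃ n', m i = n' + 1 := ⟨m i - 1, by omega⟩
          rw [hn]
          rw [Nat.succ_descFactorial_succ]
          simp
        exact_mod_cast key
    · congr 1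
      funext a
      by_cases ha : a = i
      · subst ha
        simp [Pi.sub_apply]
        omega
      · simp [Pi.sub_apply, Pi.single_eq_of_ne ha]

lemma listProd_p (hp : IsBasicSeq D p) :
    ∀ (n : ℕ) (φ : Fin n → Fin d), Function.Injective φ → ∀ (e : Fin n → ℕ) (m : Fin d → ℕ),
    (List.ofFn fun t => D (φ t) ^ e t).prod (p m)
      = (∏ t, ((m (φ t)).descFactorial (e t) : ℝ)) • p (m - ∑ t, Pi.single (φ t) (e t)) := by
  intro n
  induction n with
  | zero =>
    intro φ hφ e m
    have h0 : m - (∑ t : Fin 0, Pi.single (φ t) (e t) : Fin d → ℕ) = m := by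
      funext a
      simp
    simp [h0]
  | succ n IH =>
    intro φ hφ e m
    rw [List.ofFn_succ, List.prod_cons]
    have hrec := IH (fun t => φ t.succ) (hφ.comp (Fin.succ_injective n))
      (fun t => e t.succ) m
    have happ : (D (φ 0) ^ e 0 * (List.ofFn fun t : Fin n => D (φ t.succ) ^ e t.succ).prod) (p m)
        = (D (φ 0) ^ e 0) ((List.ofFn fun t : Fin n => D (φ t.succ) ^ e t.succ).prod (p m)) := rfl
    rw [happ, hrec, map_smul, D_pow_p hp]
    set S' : Fin d → ℕ := ∑ t : Fin n, Pi.single (φ t.succ) (e t.succ) with hS'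
    have hmS : (m - S') (φ 0) = m (φ 0) := by
      have : S' (φ 0) = 0 := by
        rw [hS', Finset.sum_apply]
        apply Finset.sum_eq_zero
        intro t _
        have hne : φ 0 ≠ φ t.succ := fun hcon => (Fin.succ_ne_zero t) (hφ hcon.symm)
        exact Pi.single_eq_of_ne hne _
      simp [Pi.sub_apply, this]
    rw [hmS, smul_smul]
    congr 1
    · rw [Fin.prod_univ_succ]
      ring
    · congr 1
      rw [Fin.sum_univ_succ]
      funext a
      simp only [hS', Pi.sub_apply, Pi.add_apply, Finset.sum_apply]
      omega

lemma dpow_p (hp : IsBasicSeq D p) (k m : Fin d → ℕ) :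
    dpow D k (p m) = (∏ i, ((m i).descFactorial (k i) : ℝ)) • p (m - k) := by
  have h := listProd_p hp d id Function.injective_id k m
  have hk : (∑ t, Pi.single (id t) (k t) : Fin d → ℕ) = k := by
    simpa using Finset.univ_sum_single k
  rw [hk] at h
  exact h

lemma dpow_p_zero (hp : IsBasicSeq D p) {k m : Fin d → ℕ} (h : ¬ k ≤ m) :
    dpow D k (p m) = 0 := by
  rw [dpow_p hp]
  obtain ⟨i, hi⟩ : ∃ i, m i < k i := by
    by_contra hcon
    push_neg at hcon
    exact h (fun i => hcon i)
  have : ((m i).descFactorial (k i) : ℝ) = 0 := by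
    rw [Nat.descFactorial_eq_zero_iff_lt.mpr hi]
    simp
  rw [Finset.prod_eq_zero (Finset.mem_univ i) this, zero_smul]

lemma eval0_p (hp : IsBasicSeq D p) {m : Fin d → ℕ} (hm : m ≠ 0) :
    eval (0 : Fin d → ℝ) (p m) = 0 := by
  apply hp.2.2.1
  obtain ⟨i, hi⟩ : ∃ i, m i ≠ 0 := by
    by_contra hcon
    push_neg at hcon
    exact hm (funext hcon)
  calc 1 ≤ m i := by omega
    _ ≤ ∑ j, m j := Finset.single_le_sum (fun j _ => Nat.zero_le _) (Finset.mem_univ i)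

lemma eval0_dpow_p (hp : IsBasicSeq D p) (k m : Fin d → ℕ) :
    eval (0 : Fin d → ℝ) (dpow D k (p m)) = if k = m then natFact m else 0 := by
  by_cases hkm : k = m
  · subst hkm
    rw [dpow_p hp]
    have h0 : k - k = (0 : Fin d → ℕ) := by funext a; simp
    rw [h0, hp.2.1, if_pos rfl, smul_eval, map_one, mul_one]
    unfold natFact
    apply Finset.prod_congr rfl
    intro i _
    rw [Nat.descFactorial_self]
  · rw [if_neg hkm]
    by_cases hle : k ≤ m
    · have hmk : m - k ≠ 0 := by
        intro hcon
        apply hkm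
        funext a
        have h1 := congrFun hcon a
        simp only [Pi.sub_apply, Pi.zero_apply] at h1
        have h2 : k a ≤ m a := hle a
        omega
      rw [dpow_p hp, smul_eval, eval0_p hp hmk, mul_zero]
    · rw [dpow_p_zero hp hle, map_zero]

end Gon
namespace Gon

variable {d : ℕ} {D : Fin d → Module.End ℝ (MvP d)} {p : (Fin d → ℕ) → MvP d}

lemma Pin_le_restrict (hp : IsBasicSeq D p) (n : Fin d → ℕ) :
    Pin p n ≤ restrictTotalDegree (Fin d) ℝ (∑ i, n i) := by
  rw [Pin, Submodule.span_le]
  rintro f ⟨k, hk, rfl⟩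
  have hk' : k ≤ n := hk
  rw [SetLike.mem_coe, mem_restrictTotalDegree, hp.1]
  exact Finset.sum_le_sum fun i _ => hk' i

lemma dpow_mem_Pin (hp : IsBasicSeq D p) {n : Fin d → ℕ} {f : MvP d}
    (hf : f ∈ Pin p n) (k : Fin d → ℕ) : dpow D k f ∈ Pin p (n - k) := by
  induction hf using Submodule.span_induction with
  | mem x hx =>
    obtain ⟨j, hj, rfl⟩ := hx
    have hj' : j ≤ n := hj
    rw [dpow_p hp]
    apply Submodule.smul_mem
    apply Submodule.subset_span
    exact ⟨j - k, fun i => Nat.sub_le_sub_right (hj' i) _, rfl⟩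
  | zero => rw [map_zero]; exact Submodule.zero_mem _
  | add x y hx hy ihx ihy => rw [map_add]; exact Submodule.add_mem _ ihx ihy
  | smul a x hx ihx => rw [map_smul]; exact Submodule.smul_mem _ _ ihx

lemma dpow_zero_of_not_le (hp : IsBasicSeq D p) {n k : Fin d → ℕ} (hk : ¬ k ≤ n)
    {f : MvP d} (hf : f ∈ Pin p n) : dpow D k f = 0 := by
  induction hf using Submodule.span_induction with
  | mem x hx =>
    obtain ⟨j, hj, rfl⟩ := hx
    have hj' : j ≤ n := hj
    apply dpow_p_zero hp
    intro hcon
    exact hk (le_trans hcon hj')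
  | zero => rw [map_zero]
  | add x y hx hy ihx ihy => rw [map_add, ihx, ihy, add_zero]
  | smul a x hx ihx => rw [map_smul, ihx, smul_zero]

lemma dpow_dpow (hp : IsBasicSeq D p) {n : Fin d → ℕ} {f : MvP d}
    (hf : f ∈ Pin p n) (j k : Fin d → ℕ) :
    dpow D j (dpow D k f) = dpow D (j + k) f := by
  induction hf using Submodule.span_induction with
  | mem x hx =>
    obtain ⟨m, hm, rfl⟩ := hx
    rw [dpow_p hp, map_smul, dpow_p hp, dpow_p hp, smul_smul]
    congr 1
    · rw [← Finset.prod_mul_distrib]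
      apply Finset.prod_congr rfl
      intro i _
      have hmk : ((m - k : Fin d → ℕ) i) = m i - k i := rfl
      have hjk : ((j + k : Fin d → ℕ) i) = j i + k i := rfl
      rw [hmk, hjk]
      have h2 := Nat.descFactorial_mul_descFactorial
        (k := k i) (m := k i + j i) (n := m i) (Nat.le_add_right _ _)
      have h3 : k i + j i - k i = j i := by omega
      rw [h3] at h2
      rw [show j i + k i = k i + j i from Nat.add_comm _ _, ← h2]
      push_cast
      ring
    · congr 1
      funext a
      simp only [Pi.sub_apply, Pi.add_apply]
      omega
  | zero => simp
  | add x y hx hy ihx ihy => simp [ihx, ihy]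
  | smul a x hx ihx => simp [ihx]

/-- Index set of multi-indices of total degree at most `N`. -/
def TN (d N : ℕ) : Finset (Fin d → ℕ) :=
  (Finset.Iic fun _ => N).filter (fun m => ∑ i, m i ≤ N)

lemma mem_TN {N : ℕ} {m : Fin d → ℕ} : m ∈ TN d N ↔ ∑ i, m i ≤ N := by
  rw [TN, Finset.mem_filter, Finset.mem_Iic]
  constructor
  · exact fun h => h.2
  · intro h
    refine ⟨fun i => ?_, h⟩
    calc m i ≤ ∑ j, m j := Finset.single_le_sum (fun j _ => Nat.zero_le _) (Finset.mem_univ i)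
      _ ≤ N := h

section Family

variable {q : (Fin d → ℕ) → MvP d} {w : (Fin d → ℕ) → Fin d → ℝ}

lemma fam_indep
    (hq2 : ∀ k m, eval (w k) (dpow D k (q m)) = if k = m then natFact m else 0) :
    LinearIndependent ℝ q := by
  rw [linearIndependent_iff]
  intro l hl
  ext k
  have h0 := congrArg (fun f => eval (w k) (dpow D k f)) hl
  simp only [map_zero] at h0
  rw [Finsupp.linearCombination_apply, Finsupp.sum, map_sum, map_sum] at h0
  have h1 : ∀ a ∈ l.support, eval (w k) (dpow D k (l a • q a)) =
      l a * (if k = a then natFact a else 0) := by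
    intro a _
    rw [map_smul, smul_eval, hq2]
  rw [Finset.sum_congr rfl h1] at h0
  simp only [Finsupp.coe_zero, Pi.zero_apply]
  by_cases hk : k ∈ l.support
  · rw [Finset.sum_eq_single k (fun m _ hm => by rw [if_neg (Ne.symm hm), mul_zero])
      (fun h => absurd hk h)] at h0
    rw [if_pos rfl] at h0
    rcases mul_eq_zero.mp h0 with h | h
    · exact h
    · exact absurd h (natFact_ne_zero (d := d) k)
  · exact Finsupp.notMem_support_iff.mp hk

lemma fam_span
    (hq1 : ∀ m, (q m).totalDegree ≤ ∑ i, m i)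
    (hq2 : ∀ k m, eval (w k) (dpow D k (q m)) = if k = m then natFact m else 0)
    (N : ℕ) :
    Submodule.span ℝ (q '' {m | ∑ i, m i ≤ N}) = restrictTotalDegree (Fin d) ℝ N := by
  have hset : (TN d N : Set (Fin d → ℕ)) = {m | ∑ i, m i ≤ N} := by
    ext m; simp [mem_TN]
  -- span of q-image is inside the restricted space
  have le1 : Submodule.span ℝ (q '' {m | ∑ i, m i ≤ N}) ≤ restrictTotalDegree (Fin d) ℝ N := by
    rw [Submodule.span_le]
    rintro f ⟨m, hm, rfl⟩
    rw [SetLike.mem_coe, mem_restrictTotalDegree]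
    exact le_trans (hq1 m) hm
  -- the restricted space is spanned by monomials indexed by `TN d N`
  set g : (Fin d → ℕ) → MvP d := fun m => monomial (Finsupp.equivFunOnFinite.symm m) 1 with hg
  have le2 : restrictTotalDegree (Fin d) ℝ N ≤
      Submodule.span ℝ (((TN d N).image g : Finset (MvP d)) : Set (MvP d)) := by
    intro f hf
    rw [mem_restrictTotalDegree] at hf
    rw [as_sum f]
    apply Submodule.sum_mem
    intro v hv
    have hv' : (v.sum fun _ e => e) ≤ N := le_trans (le_totalDegree hv) hf
    have hmono : monomial v (coeff v f) = (coeff v f) • monomial v 1 := by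
      rw [smul_monomial, smul_eq_mul, mul_one]
    rw [hmono]
    apply Submodule.smul_mem
    apply Submodule.subset_span
    rw [Finset.coe_image]
    refine ⟨Finsupp.equivFunOnFinite v, ?_, ?_⟩
    · rw [Finset.mem_coe, mem_TN]
      have : ∑ i, (Finsupp.equivFunOnFinite v) i = v.sum fun _ e => e := by
        rw [Finsupp.sum_fintype]
        · rfl
        · intro i; rfl
      rw [this]
      exact hv'
    · rw [hg]
      simp
  have fd : FiniteDimensional ℝ (restrictTotalDegree (Fin d) ℝ N) := by infer_instance
  -- upper bound on the dimension
  have hrank1 : Module.finrank ℝ (restrictTotalDegree (Fin d) ℝ N) ≤ (TN d N).card := by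
    calc Module.finrank ℝ (restrictTotalDegree (Fin d) ℝ N)
        ≤ Module.finrank ℝ (Submodule.span ℝ (((TN d N).image g : Finset (MvP d)) : Set (MvP d))) :=
          Submodule.finrank_mono le2
      _ ≤ ((TN d N).image g).card := finrank_span_finset_le_card _
      _ ≤ (TN d N).card := Finset.card_image_le
  -- lower bound: the q's with indices in `TN d N` are independent
  have hindep : LinearIndependent ℝ (fun j : (TN d N : Finset (Fin d → ℕ)) => q j) :=
    (fam_indep hq2).comp Subtype.val Subtype.val_injective
  have hrange : Set.range (fun j : (TN d N : Finset (Fin d → ℕ)) => q j) =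
      q '' {m | ∑ i, m i ≤ N} := by
    rw [← hset]
    ext f
    constructor
    · rintro ⟨⟨m, hm⟩, rfl⟩
      exact ⟨m, hm, rfl⟩
    · rintro ⟨m, hm, rfl⟩
      exact ⟨⟨m, hm⟩, rfl⟩
  have hrank2 : Module.finrank ℝ (Submodule.span ℝ (q '' {m | ∑ i, m i ≤ N})) = (TN d N).card := by
    rw [← hrange, finrank_span_eq_card hindep, Fintype.card_coe]
  apply Submodule.eq_of_le_of_finrank_le le1
  rw [hrank2]
  exact hrank1

end Family

end Gon
namespace Gon

variable {d : ℕ} {D : Fin d → Module.End ℝ (MvP d)} {p : (Fin d → ℕ) → MvP d}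

section Family

variable {q : (Fin d → ℕ) → MvP d} {w : (Fin d → ℕ) → Fin d → ℝ}

lemma fam_range_subtype (N : ℕ) :
    Set.range (fun j : (TN d N : Finset (Fin d → ℕ)) => q ↑j) = q '' {m | ∑ i, m i ≤ N} := by
  ext f
  constructor
  · rintro ⟨⟨m, hm⟩, rfl⟩
    exact ⟨m, mem_TN.mp hm, rfl⟩
  · rintro ⟨m, hm, rfl⟩
    exact ⟨⟨m, mem_TN.mpr hm⟩, rfl⟩

lemma fam_span_range
    (hq1 : ∀ m, (q m).totalDegree ≤ ∑ i, m i)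
    (hq2 : ∀ k m, eval (w k) (dpow D k (q m)) = if k = m then natFact m else 0)
    (N : ℕ) :
    Submodule.span ℝ (Set.range (fun j : (TN d N : Finset (Fin d → ℕ)) => q ↑j)) =
      restrictTotalDegree (Fin d) ℝ N := by
  rw [fam_range_subtype]
  exact fam_span hq1 hq2 N

lemma fam_ext
    (hq1 : ∀ m, (q m).totalDegree ≤ ∑ i, m i)
    (hq2 : ∀ k m, eval (w k) (dpow D k (q m)) = if k = m then natFact m else 0)
    {N : ℕ} {f g : MvP d}
    (hf : f ∈ restrictTotalDegree (Fin d) ℝ N) (hg : g ∈ restrictTotalDegree (Fin d) ℝ N)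
    (h : ∀ k : Fin d → ℕ, ∑ i, k i ≤ N →
      eval (w k) (dpow D k f) = eval (w k) (dpow D k g)) : f = g := by
  have hmem : f - g ∈ Submodule.span ℝ
      (Set.range (fun j : (TN d N : Finset (Fin d → ℕ)) => q ↑j)) := by
    rw [fam_span_range hq1 hq2 N]
    exact sub_mem hf hg
  obtain ⟨c, hc⟩ := (Submodule.mem_span_range_iff_exists_fun ℝ).mp hmem
  have hall : ∀ j : (TN d N : Finset (Fin d → ℕ)), c j = 0 := by
    intro j
    have h0 := congrArg (fun x => eval (w ↑j) (dpow D (↑j) x)) hc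
    rw [map_sum, map_sum] at h0
    have h1 : ∀ a ∈ (Finset.univ : Finset (TN d N : Finset (Fin d → ℕ))),
        eval (w ↑j) (dpow D (↑j) (c a • q ↑a)) =
          c a * (if (j : Fin d → ℕ) = ↑a then natFact (↑a : Fin d → ℕ) else 0) := by
      intro a _
      rw [map_smul, smul_eval, hq2]
    rw [Finset.sum_congr rfl h1] at h0
    rw [Finset.sum_eq_single j
      (fun a _ ha => by rw [if_neg (fun hcon => ha (Subtype.ext hcon.symm)), mul_zero])
      (fun hcon => absurd (Finset.mem_univ j) hcon)] at h0
    rw [if_pos rfl] at h0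
    have h2 : eval (w ↑j) (dpow D (↑j) (f - g)) = 0 := by
      rw [map_sub, map_sub, h ↑j (mem_TN.mp j.2), sub_self]
    rw [h2] at h0
    rcases mul_eq_zero.mp h0 with hz | hz
    · exact hz
    · exact absurd hz (natFact_ne_zero _)
  have hfg : f - g = 0 := by
    rw [← hc]
    apply Finset.sum_eq_zero
    intro a _
    rw [hall a, zero_smul]
  exact sub_eq_zero.mp hfg

lemma fam_mem_restrict (hq1 : ∀ m, (q m).totalDegree ≤ ∑ i, m i)
    {N : ℕ} {m : Fin d → ℕ} (hm : ∑ i, m i ≤ N) :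
    q m ∈ restrictTotalDegree (Fin d) ℝ N := by
  rw [mem_restrictTotalDegree]
  exact le_trans (hq1 m) hm

lemma fam_expansion
    (hq1 : ∀ m, (q m).totalDegree ≤ ∑ i, m i)
    (hq2 : ∀ k m, eval (w k) (dpow D k (q m)) = if k = m then natFact m else 0)
    {N : ℕ} {f : MvP d} (hf : f ∈ restrictTotalDegree (Fin d) ℝ N) :
    f = ∑ k ∈ TN d N, (eval (w k) (dpow D k f) / natFact k) • q k := by
  apply fam_ext hq1 hq2 hf
  · apply Submodule.sum_mem
    intro k hk
    exact Submodule.smul_mem _ _ (fam_mem_restrict hq1 (mem_TN.mp hk))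
  · intro k0 hk0
    rw [map_sum, map_sum]
    have h1 : ∀ a ∈ TN d N,
        eval (w k0) (dpow D k0 ((eval (w a) (dpow D a f) / natFact a) • q a)) =
          (eval (w a) (dpow D a f) / natFact a) * (if k0 = a then natFact a else 0) := by
      intro a _
      rw [map_smul, smul_eval, hq2]
    rw [Finset.sum_congr rfl h1]
    rw [Finset.sum_eq_single k0
      (fun a _ ha => by rw [if_neg (Ne.symm ha), mul_zero])
      (fun hcon => absurd (mem_TN.mpr hk0) hcon)]
    rw [if_pos rfl, div_mul_cancel₀ _ (natFact_ne_zero _)]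

end Family

lemma restrict_le_span_monomials (N : ℕ) :
    restrictTotalDegree (Fin d) ℝ N ≤ Submodule.span ℝ
      (((TN d N).image (fun m : Fin d → ℕ =>
        (monomial (Finsupp.equivFunOnFinite.symm m) 1 : MvP d)) : Finset (MvP d)) : Set (MvP d)) := by
  intro f hf
  rw [mem_restrictTotalDegree] at hf
  rw [as_sum f]
  apply Submodule.sum_mem
  intro v hv
  have hv' : (v.sum fun _ e => e) ≤ N := le_trans (le_totalDegree hv) hf
  have hmono : monomial v (coeff v f) = (coeff v f) • monomial v 1 := by
    rw [smul_monomial, smul_eq_mul, mul_one]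
  rw [hmono]
  apply Submodule.smul_mem
  apply Submodule.subset_span
  rw [Finset.coe_image]
  refine ⟨Finsupp.equivFunOnFinite v, ?_, ?_⟩
  · rw [Finset.mem_coe, mem_TN]
    have : ∑ i, (Finsupp.equivFunOnFinite v) i = v.sum fun _ e => e := by
      rw [Finsupp.sum_fintype]
      · rfl
      · intro i; rfl
    rw [this]
    exact hv'
  · simp

lemma shiftOp_mem_restrict {N : ℕ} (v : Fin d → ℝ) {f : MvP d}
    (hf : f ∈ restrictTotalDegree (Fin d) ℝ N) :
    shiftOp v f ∈ restrictTotalDegree (Fin d) ℝ N := by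
  have hf' := restrict_le_span_monomials N hf
  clear hf
  induction hf' using Submodule.span_induction with
  | mem x hx =>
    rw [Finset.coe_image] at hx
    obtain ⟨m, hm, rfl⟩ := hx
    rw [Finset.mem_coe, mem_TN] at hm
    rw [mem_restrictTotalDegree]
    set s := Finsupp.equivFunOnFinite.symm m with hs
    have heq : shiftOp v (monomial s 1) =
        s.prod fun i e => (X i + C (v i) : MvP d) ^ e := by
      rw [shiftOp_apply, aeval_monomial, map_one, one_mul]
    rw [heq]
    have hdeg : (s.prod fun i e => (X i + C (v i) : MvP d) ^ e).totalDegree ≤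
        ∑ i ∈ s.support, s i := by
      refine le_trans (totalDegree_finset_prod _ _) ?_
      apply Finset.sum_le_sum
      intro i _
      refine le_trans (totalDegree_pow _ _) ?_
      have h1 : (X i + C (v i) : MvP d).totalDegree ≤ 1 := by
        refine le_trans (totalDegree_add _ _) ?_
        rw [totalDegree_X, totalDegree_C]
        simp
      calc s i * (X i + C (v i) : MvP d).totalDegree ≤ s i * 1 :=
            Nat.mul_le_mul_left _ h1
        _ = s i := mul_one _
    refine le_trans hdeg ?_
    have : ∑ i ∈ s.support, s i = s.sum fun _ e => e := rfl
    rw [this]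
    have hsum : (s.sum fun _ e => e) = ∑ i, m i := by
      rw [Finsupp.sum_fintype]
      · rw [hs]
        apply Finset.sum_congr rfl
        intro i _
        simp
      · intro i; rfl
    rw [hsum]
    exact hm
  | zero => rw [map_zero]; exact Submodule.zero_mem _
  | add x y hx hy ihx ihy => rw [map_add]; exact Submodule.add_mem _ ihx ihy
  | smul a x hx ihx => rw [map_smul]; exact Submodule.smul_mem _ _ ihx

end Gon
namespace Gon

variable {d : ℕ} {D : Fin d → Module.End ℝ (MvP d)} {p : (Fin d → ℕ) → MvP d}
variable {Z : (Fin d → ℕ) → Fin d → ℝ} {t : (Fin d → ℕ) → MvP d}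

lemma t_duality (hp : IsBasicSeq D p) (ht : ∀ n, IsGoncarov D p Z n (t n)) (k m : Fin d → ℕ) :
    eval (Z k) (dpow D k (t m)) = if k = m then natFact m else 0 := by
  by_cases hkm : k ≤ m
  · exact (ht m).2 k hkm
  · rw [dpow_zero_of_not_le hp hkm (ht m).1, map_zero,
      if_neg (fun h => hkm (le_of_eq h))]

lemma t_deg (hp : IsBasicSeq D p) (ht : ∀ n, IsGoncarov D p Z n (t n)) (m : Fin d → ℕ) :
    (t m).totalDegree ≤ ∑ i, m i :=
  (mem_restrictTotalDegree _ _ _).mp (Pin_le_restrict hp m (ht m).1)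

lemma p_deg (hp : IsBasicSeq D p) (m : Fin d → ℕ) : (p m).totalDegree ≤ ∑ i, m i :=
  le_of_eq (hp.1 m)

lemma p_duality (hp : IsBasicSeq D p) (k m : Fin d → ℕ) :
    eval ((fun _ => (0 : Fin d → ℝ)) k) (dpow D k (p m)) = if k = m then natFact m else 0 :=
  eval0_dpow_p hp k m

lemma sum_single_one (i : Fin d) : ∑ j, (Pi.single i 1 : Fin d → ℕ) j = 1 := by
  simp

lemma natFact_single (i : Fin d) : natFact (Pi.single i 1 : Fin d → ℕ) = 1 := by
  unfold natFact
  apply Finset.prod_eq_one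
  intro j _
  by_cases hji : j = i
  · subst hji; simp
  · rw [Pi.single_eq_of_ne hji]
    simp

lemma le_single_cases {k : Fin d → ℕ} {i : Fin d} (hk : k ≤ Pi.single i 1) :
    k = 0 ∨ k = Pi.single i 1 := by
  by_cases hki : k i = 0
  · left
    funext j
    by_cases hji : j = i
    · subst hji; exact hki
    · have h1 : k j ≤ (Pi.single i 1 : Fin d → ℕ) j := hk j
      rw [Pi.single_eq_of_ne hji] at h1
      simpa using h1
  · right
    funext j
    by_cases hji : j = i
    · subst hji
      have h1 : k j ≤ (Pi.single j 1 : Fin d → ℕ) j := hk j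
      rw [Pi.single_eq_same] at h1
      rw [Pi.single_eq_same]
      omega
    · have h1 : k j ≤ (Pi.single i 1 : Fin d → ℕ) j := hk j
      rw [Pi.single_eq_of_ne hji] at h1
      rw [Pi.single_eq_of_ne hji]
      simpa using h1

lemma index_le_one {m : Fin d → ℕ} (hm : ∑ i, m i ≤ 1) :
    m = 0 ∨ ∃ i, m = Pi.single i 1 := by
  by_cases h0 : m = 0
  · left; exact h0
  right
  obtain ⟨i, hi⟩ : ∃ i, m i ≠ 0 := by
    by_contra hc
    push_neg at hc
    exact h0 (funext hc)
  have hile : m i ≤ ∑ i', m i' :=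
    Finset.single_le_sum (fun j _ => Nat.zero_le _) (Finset.mem_univ i)
  refine ⟨i, funext fun j => ?_⟩
  by_cases hji : j = i
  · subst hji
    rw [Pi.single_eq_same]
    omega
  · rw [Pi.single_eq_of_ne hji]
    have h2 : m j + m i ≤ ∑ i', m i' := by
      have hsub : ({j, i} : Finset (Fin d)) ⊆ Finset.univ := Finset.subset_univ _
      calc m j + m i = ∑ i' ∈ ({j, i} : Finset (Fin d)), m i' := (Finset.sum_pair hji).symm
        _ ≤ ∑ i', m i' := Finset.sum_le_sum_of_subset hsub
    omega

/-- The scalar form of the binomial identity. -/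
lemma binomial_scalar
    (hbt2 : ∀ n : Fin d → ℕ,
      (aeval fun i => (X (Sum.inl i) + X (Sum.inr i) : MvPolynomial (Fin d ⊕ Fin d) ℝ)) (t n) =
      ∑ k ∈ Finset.Iic n, (∏ i, ((n i).choose (k i) : ℝ)) •
          ((rename Sum.inl (t k)) * (rename Sum.inr (t (n - k)))))
    (n : Fin d → ℕ) (x y : Fin d → ℝ) :
    eval (x + y) (t n) = ∑ k ∈ Finset.Iic n,
      (∏ i, ((n i).choose (k i) : ℝ)) * (eval x (t k) * eval y (t (n - k))) := by
  have h := congrArg (eval (Sum.elim x y)) (hbt2 n)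
  rw [eval_aeval] at h
  have hxy : (fun i => eval (Sum.elim x y) (X (Sum.inl i) + X (Sum.inr i))) = x + y := by
    funext i
    simp
  rw [hxy] at h
  rw [h, map_sum]
  apply Finset.sum_congr rfl
  intro k _
  rw [smul_eval, eval_mul, eval_rename, eval_rename]
  rfl

/-- Polynomial form in `x`, with `y = c` a fixed real vector. -/
lemma binomial_poly
    (hbt2 : ∀ n : Fin d → ℕ,
      (aeval fun i => (X (Sum.inl i) + X (Sum.inr i) : MvPolynomial (Fin d ⊕ Fin d) ℝ)) (t n) =
      ∑ k ∈ Finset.Iic n, (∏ i, ((n i).choose (k i) : ℝ)) •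
          ((rename Sum.inl (t k)) * (rename Sum.inr (t (n - k)))))
    (n : Fin d → ℕ) (c : Fin d → ℝ) :
    shiftOp c (t n) = ∑ k ∈ Finset.Iic n,
      ((∏ i, ((n i).choose (k i) : ℝ)) * eval c (t (n - k))) • t k := by
  apply MvPolynomial.funext
  intro x
  rw [eval_shiftOp, binomial_scalar hbt2 n x c, map_sum]
  apply Finset.sum_congr rfl
  intro k _
  rw [smul_eval]
  ring

/-- Forward key step: `𝔡^m t_n`, shifted by `z_m`, is a multiple of `t_{n-m}`. -/
lemma forward_step1 (hD1 : ∀ i, ShiftInv (D i)) (hp : IsBasicSeq D p)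
    (ht : ∀ n, IsGoncarov D p Z n (t n))
    (hbt2 : ∀ n : Fin d → ℕ,
      (aeval fun i => (X (Sum.inl i) + X (Sum.inr i) : MvPolynomial (Fin d ⊕ Fin d) ℝ)) (t n) =
      ∑ k ∈ Finset.Iic n, (∏ i, ((n i).choose (k i) : ℝ)) •
          ((rename Sum.inl (t k)) * (rename Sum.inr (t (n - k)))))
    (n m : Fin d → ℕ) (hm : m ≤ n) :
    shiftOp (Z m) (dpow D m (t n)) =
      ((∏ i, ((n i).choose (m i) : ℝ)) * natFact m) • t (n - m) := by
  apply MvPolynomial.funext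
  intro c
  rw [eval_shiftOp, smul_eval]
  have h2 := congrArg (fun f => eval (Z m) (dpow D m f)) (binomial_poly hbt2 n c)
  rw [dpow_shiftOp hD1, eval_shiftOp, map_sum, map_sum] at h2
  have h3 : ∀ k ∈ Finset.Iic n,
      eval (Z m) (dpow D m (((∏ i, ((n i).choose (k i) : ℝ)) * eval c (t (n - k))) • t k)) =
        ((∏ i, ((n i).choose (k i) : ℝ)) * eval c (t (n - k))) *
          (if m = k then natFact k else 0) := by
    intro k _
    rw [map_smul, smul_eval, t_duality hp ht]
  rw [Finset.sum_congr rfl h3] at h2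
  rw [Finset.sum_eq_single m
    (fun k _ hk => by rw [if_neg (Ne.symm hk), mul_zero])
    (fun hcon => absurd (Finset.mem_Iic.mpr hm) hcon)] at h2
  rw [if_pos rfl] at h2
  calc eval (c + Z m) (dpow D m (t n)) = eval (Z m + c) (dpow D m (t n)) := by
        rw [add_comm]
    _ = (∏ i, ((n i).choose (m i) : ℝ)) * eval c (t (n - m)) * natFact m := h2
    _ = (∏ i, ((n i).choose (m i) : ℝ)) * natFact m * eval c (t (n - m)) := by ring

end Gon
namespace Gon

variable {d : ℕ} {D : Fin d → Module.End ℝ (MvP d)} {p : (Fin d → ℕ) → MvP d}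
variable {Z : (Fin d → ℕ) → Fin d → ℝ} {t : (Fin d → ℕ) → MvP d}

lemma z_add (hD1 : ∀ i, ShiftInv (D i)) (hp : IsBasicSeq D p)
    (ht : ∀ n, IsGoncarov D p Z n (t n))
    (hbt2 : ∀ n : Fin d → ℕ,
      (aeval fun i => (X (Sum.inl i) + X (Sum.inr i) : MvPolynomial (Fin d ⊕ Fin d) ℝ)) (t n) =
      ∑ k ∈ Finset.Iic n, (∏ i, ((n i).choose (k i) : ℝ)) •
          ((rename Sum.inl (t k)) * (rename Sum.inr (t (n - k)))))
    (a b : Fin d → ℕ) : Z (a + b) = Z a + Z b := by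
  have hval : ∀ i : Fin d, eval (Z (a + b)) (p (Pi.single i 1)) =
      eval (Z a + Z b) (p (Pi.single i 1)) := by
    intro i
    set n := a + b + Pi.single i 1 with hn
    have hbn : b ≤ n := fun j => by rw [hn]; simp only [Pi.add_apply]; omega
    have h1 := forward_step1 hD1 hp ht hbt2 n b hbn
    have h2 := congrArg (fun f => eval (Z a) (dpow D a f)) h1
    rw [dpow_shiftOp hD1, eval_shiftOp, dpow_dpow hp (ht n).1 a b,
      map_smul, smul_eval, t_duality hp ht] at h2
    have hne : a ≠ n - b := by
      intro hcon
      have hcf := congrFun hcon i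
      rw [hn] at hcf
      simp only [Pi.sub_apply, Pi.add_apply, Pi.single_eq_same] at hcf
      omega
    rw [if_neg hne, mul_zero] at h2
    have e2 : eval (Z (a + b)) (dpow D (a + b) (t n)) = 0 := by
      rw [t_duality hp ht, if_neg]
      intro hcon
      have hcf := congrFun hcon i
      rw [hn] at hcf
      simp only [Pi.add_apply, Pi.single_eq_same] at hcf
      omega
    have hgPin : dpow D (a + b) (t n) ∈ Pin p (Pi.single i 1) := by
      have hmem := dpow_mem_Pin hp (ht n).1 (a + b)
      have heq : n - (a + b) = Pi.single i 1 := by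
        funext j
        rw [hn]
        simp only [Pi.sub_apply, Pi.add_apply]
        omega
      rwa [heq] at hmem
    have hconst : dpow D n (t n) = natFact n • 1 := by
      have hmem := dpow_mem_Pin hp (ht n).1 n
      have heq : n - n = (0 : Fin d → ℕ) := by funext j; simp
      rw [heq] at hmem
      have hset : p '' {k | k ≤ (0 : Fin d → ℕ)} = {p 0} := by
        ext f
        simp only [Set.mem_image, Set.mem_setOf_eq, Set.mem_singleton_iff]
        constructor
        · rintro ⟨k, hk, rfl⟩
          have hk0 : k = 0 := le_antisymm hk (fun j => Nat.zero_le _)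
          rw [hk0]
        · rintro rfl
          exact ⟨0, le_refl _, rfl⟩
      rw [Pin, hset] at hmem
      obtain ⟨r, hr⟩ := Submodule.mem_span_singleton.mp hmem
      rw [hp.2.1] at hr
      have hev := t_duality hp ht n n
      rw [if_pos rfl, ← hr, smul_eval, map_one, mul_one] at hev
      rw [← hr, hev]
    have hpair : dpow D (a + b) (t n) ∈ Submodule.span ℝ {p 0, p (Pi.single i 1)} := by
      refine Submodule.span_mono ?_ hgPin
      rintro f ⟨k, hk, rfl⟩
      rcases le_single_cases hk with rfl | rfl
      · exact Set.mem_insert _ _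
      · exact Set.mem_insert_of_mem _ rfl
    obtain ⟨α, β, hab⟩ := Submodule.mem_span_pair.mp hpair
    have hne0 : (Pi.single i 1 : Fin d → ℕ) ≠ 0 := by
      intro hcon
      have := congrFun hcon i
      simp at this
    have h3 := dpow_dpow hp (ht n).1 (Pi.single i 1) (a + b)
    have heqn : Pi.single i 1 + (a + b) = n := by
      funext j
      rw [hn]
      simp only [Pi.add_apply]
      omega
    rw [heqn, hconst] at h3
    have hL : eval (0 : Fin d → ℝ) (dpow D (Pi.single i 1)
        (α • p 0 + β • p (Pi.single i 1))) = β := by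
      rw [map_add, map_smul, map_smul, map_add, smul_eval, smul_eval,
        eval0_dpow_p hp, eval0_dpow_p hp, if_neg hne0, if_pos rfl, natFact_single,
        mul_zero, mul_one, zero_add]
    have hβ : β = natFact n := by
      rw [← hL, hab, h3, smul_eval, map_one, mul_one]
    have q1 := congrArg (eval (Z (a + b))) hab
    rw [map_add, smul_eval, smul_eval, hp.2.1, map_one, mul_one, e2] at q1
    have q2 := congrArg (eval (Z a + Z b)) hab
    rw [map_add, smul_eval, smul_eval, hp.2.1, map_one, mul_one, h2] at q2
    have hβne : β ≠ 0 := by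
      rw [hβ]
      exact natFact_ne_zero n
    have hXY : β * eval (Z (a + b)) (p (Pi.single i 1)) =
        β * eval (Z a + Z b) (p (Pi.single i 1)) := by linarith
    exact mul_left_cancel₀ hβne hXY
  funext j
  have hX : (X j : MvP d) ∈ Submodule.span ℝ (p '' {m | ∑ i, m i ≤ 1}) := by
    rw [fam_span (p_deg hp) (p_duality hp) 1, mem_restrictTotalDegree]
    exact le_of_eq (totalDegree_X j)
  have hXval : ∀ f ∈ Submodule.span ℝ (p '' {m | ∑ i, m i ≤ 1}),
      eval (Z (a + b)) f = eval (Z a + Z b) f := by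
    intro f hf
    induction hf using Submodule.span_induction with
    | mem x hx =>
      obtain ⟨m, hm, rfl⟩ := hx
      rcases index_le_one hm with rfl | ⟨i, rfl⟩
      · rw [hp.2.1, map_one, map_one]
      · exact hval i
    | zero => rw [map_zero, map_zero]
    | add x y hx hy ihx ihy => rw [map_add, map_add, ihx, ihy]
    | smul r x hx ihx => rw [smul_eval, smul_eval, ihx]
  simpa using hXval (X j) hX

lemma forward_direction (hD1 : ∀ i, ShiftInv (D i)) (hp : IsBasicSeq D p)
    (ht : ∀ n, IsGoncarov D p Z n (t n))
    (hbt2 : ∀ n : Fin d → ℕ,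
      (aeval fun i => (X (Sum.inl i) + X (Sum.inr i) : MvPolynomial (Fin d ⊕ Fin d) ℝ)) (t n) =
      ∑ k ∈ Finset.Iic n, (∏ i, ((n i).choose (k i) : ℝ)) •
          ((rename Sum.inl (t k)) * (rename Sum.inr (t (n - k)))))
    : ∃ A : Matrix (Fin d) (Fin d) ℝ, ∀ k : Fin d → ℕ, Z k = A.mulVec fun i => (k i : ℝ) := by
  have hzadd := z_add hD1 hp ht hbt2
  have hz0 : Z 0 = 0 := by
    have h := hzadd 0 0
    rw [add_zero] at h
    exact (left_eq_add.mp h)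
  refine ⟨Matrix.of (fun j i => Z (Pi.single i 1) j), ?_⟩
  have hmv : ∀ (v : Fin d → ℝ) (j : Fin d),
      (Matrix.of (fun j i => Z (Pi.single i 1) j)).mulVec v j =
        ∑ i, Z (Pi.single i 1) j * v i := by
    intro v j
    rfl
  have main : ∀ (N : ℕ) (k : Fin d → ℕ), ∑ i, k i ≤ N →
      Z k = (Matrix.of (fun j i => Z (Pi.single i 1) j)).mulVec (fun i => (k i : ℝ)) := by
    intro N
    induction N with
    | zero =>
      intro k hk
      have hk0 : k = 0 := by
        funext j
        simp only [Pi.zero_apply]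
        have : k j ≤ ∑ i, k i :=
          Finset.single_le_sum (fun i _ => Nat.zero_le _) (Finset.mem_univ j)
        omega
      subst hk0
      rw [hz0]
      funext j
      rw [hmv]
      simp
    | succ N IH =>
      intro k hk
      by_cases hk0 : k = 0
      · subst hk0
        rw [hz0]
        funext j
        rw [hmv]
        simp
      · obtain ⟨i, hi⟩ : ∃ i, k i ≠ 0 := by
          by_contra hc
          push_neg at hc
          exact hk0 (funext hc)
        set k' := k - Pi.single i 1 with hk'
        have hsplit : k = k' + Pi.single i 1 := by
          funext j
          rw [hk']
          simp only [Pi.add_apply, Pi.sub_apply]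
          by_cases hji : j = i
          · subst hji
            rw [Pi.single_eq_same]
            omega
          · rw [Pi.single_eq_of_ne hji]
            omega
        have hsum' : ∑ i', k' i' ≤ N := by
          have h1 : ∑ i', k i' = ∑ i', k' i' + ∑ i', (Pi.single i 1 : Fin d → ℕ) i' := by
            rw [← Finset.sum_add_distrib]
            apply Finset.sum_congr rfl
            intro j _
            have := congrFun hsplit j
            simpa using this
          rw [sum_single_one] at h1
          omega
        have hIH := IH k' hsum'
        have hzk : Z k = Z k' + Z (Pi.single i 1) := by
          rw [hsplit]
          exact hzadd k' (Pi.single i 1)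
        have hcast : (fun i' => (k i' : ℝ)) = (fun i' => (k' i' : ℝ)) +
            (fun i' => ((Pi.single i 1 : Fin d → ℕ) i' : ℝ)) := by
          funext i'
          have hcf := congrFun hsplit i'
          simp only [Pi.add_apply] at hcf ⊢
          exact_mod_cast hcf
        rw [hzk, hcast, Matrix.mulVec_add, hIH]
        congr 1
        funext j
        rw [hmv]
        rw [Finset.sum_eq_single i
          (fun i' _ hne => by
            rw [show ((Pi.single i 1 : Fin d → ℕ) i' : ℝ) = 0 from by
              rw [Pi.single_eq_of_ne hne]; simp, mul_zero])
          (fun hcon => absurd (Finset.mem_univ i) hcon)]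
        rw [Pi.single_eq_same]
        simp
  exact fun k => main (∑ i, k i) k le_rfl

end Gon
namespace Gon

variable {d : ℕ} {D : Fin d → Module.End ℝ (MvP d)} {p : (Fin d → ℕ) → MvP d}
variable {Z : (Fin d → ℕ) → Fin d → ℝ} {t : (Fin d → ℕ) → MvP d}

lemma zadd_of_linear {A : Matrix (Fin d) (Fin d) ℝ}
    (hA : ∀ k : Fin d → ℕ, Z k = A.mulVec fun i => (k i : ℝ)) (a b : Fin d → ℕ) :
    Z (a + b) = Z a + Z b := by
  rw [hA, hA, hA, ← Matrix.mulVec_add]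
  congr 1
  funext i
  simp only [Pi.add_apply]
  push_cast
  rfl

lemma backward_key (hD1 : ∀ i, ShiftInv (D i)) (hp : IsBasicSeq D p)
    (ht : ∀ n, IsGoncarov D p Z n (t n))
    {A : Matrix (Fin d) (Fin d) ℝ} (hA : ∀ k : Fin d → ℕ, Z k = A.mulVec fun i => (k i : ℝ))
    (n k : Fin d → ℕ) (hk : k ≤ n) :
    shiftOp (Z k) (dpow D k (t n)) =
      (∏ i, ((n i).descFactorial (k i) : ℝ)) • t (n - k) := by
  have hzadd := zadd_of_linear hA
  apply fam_ext (t_deg hp ht) (t_duality hp ht) (N := ∑ i, (n - k) i)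
  · exact shiftOp_mem_restrict _ (Pin_le_restrict hp (n - k) (dpow_mem_Pin hp (ht n).1 k))
  · exact Submodule.smul_mem _ _ (fam_mem_restrict (t_deg hp ht) le_rfl)
  · intro j hj
    have hLHS : eval (Z j) (dpow D j (shiftOp (Z k) (dpow D k (t n)))) =
        if j + k = n then natFact n else 0 := by
      rw [dpow_shiftOp hD1, eval_shiftOp, dpow_dpow hp (ht n).1 j k, ← hzadd j k,
        t_duality hp ht]
    have hRHS : eval (Z j) (dpow D j ((∏ i, ((n i).descFactorial (k i) : ℝ)) • t (n - k))) =
        (∏ i, ((n i).descFactorial (k i) : ℝ)) * (if j = n - k then natFact (n - k) else 0) := by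
      rw [map_smul, smul_eval, t_duality hp ht]
    rw [hLHS, hRHS]
    by_cases hjk : j = n - k
    · subst hjk
      have hsum : n - k + k = n := by
        funext a
        simp only [Pi.add_apply, Pi.sub_apply]
        have hka : k a ≤ n a := hk a
        omega
      rw [if_pos hsum, if_pos rfl]
      unfold natFact
      rw [← Finset.prod_mul_distrib]
      apply Finset.prod_congr rfl
      intro i _
      have h2 : ((n - k : Fin d → ℕ) i) = n i - k i := rfl
      rw [h2]
      exact_mod_cast ((Nat.factorial_mul_descFactorial (hk i)).symm.trans (Nat.mul_comm _ _))
    · have hjkn : ¬ (j + k = n) := by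
        intro hcon
        apply hjk
        funext a
        have hca := congrFun hcon a
        simp only [Pi.add_apply] at hca
        simp only [Pi.sub_apply]
        omega
      rw [if_neg hjkn, if_neg hjk, mul_zero]

lemma backward_scalar (hD1 : ∀ i, ShiftInv (D i)) (hp : IsBasicSeq D p)
    (ht : ∀ n, IsGoncarov D p Z n (t n))
    {A : Matrix (Fin d) (Fin d) ℝ} (hA : ∀ k : Fin d → ℕ, Z k = A.mulVec fun i => (k i : ℝ))
    (n : Fin d → ℕ) (x c : Fin d → ℝ) :
    eval (x + c) (t n) = ∑ k ∈ Finset.Iic n,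
      (∏ i, ((n i).choose (k i) : ℝ)) * (eval x (t k) * eval c (t (n - k))) := by
  classical
  have hf : shiftOp c (t n) ∈ restrictTotalDegree (Fin d) ℝ (∑ i, n i) :=
    shiftOp_mem_restrict c (Pin_le_restrict hp n (ht n).1)
  have hexp := fam_expansion (t_deg hp ht) (t_duality hp ht) hf
  have hcoeff : ∀ k ∈ TN d (∑ i, n i),
      (eval (Z k) (dpow D k (shiftOp c (t n))) / natFact k) • t k =
        (if k ≤ n then (∏ i, ((n i).choose (k i) : ℝ)) * eval c (t (n - k)) else 0) • t k := by
    intro k _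
    congr 1
    by_cases hk : k ≤ n
    · rw [if_pos hk, dpow_shiftOp hD1, eval_shiftOp]
      have h1 : eval (Z k + c) (dpow D k (t n)) = eval c (shiftOp (Z k) (dpow D k (t n))) := by
        rw [eval_shiftOp, add_comm]
      rw [h1, backward_key hD1 hp ht hA n k hk, smul_eval]
      have hdesc : (∏ i, ((n i).descFactorial (k i) : ℝ)) =
          natFact k * ∏ i, ((n i).choose (k i) : ℝ) := by
        unfold natFact
        rw [← Finset.prod_mul_distrib]
        apply Finset.prod_congr rfl
        intro i _
        exact_mod_cast Nat.descFactorial_eq_factorial_mul_choose (n i) (k i)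
      rw [hdesc]
      have hnz := natFact_ne_zero (d := d) k
      field_simp
    · rw [if_neg hk, dpow_shiftOp hD1, dpow_zero_of_not_le hp hk (ht n).1]
      simp
  rw [Finset.sum_congr rfl hcoeff] at hexp
  have hsub : Finset.Iic n ⊆ TN d (∑ i, n i) := by
    intro k hk
    rw [mem_TN]
    exact Finset.sum_le_sum fun i _ => (Finset.mem_Iic.mp hk) i
  have hzero : ∀ k ∈ TN d (∑ i, n i), k ∉ Finset.Iic n →
      (if k ≤ n then (∏ i, ((n i).choose (k i) : ℝ)) * eval c (t (n - k)) else 0) • t k = 0 := by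
    intro k _ hk
    rw [if_neg (fun hcon => hk (Finset.mem_Iic.mpr hcon)), zero_smul]
  rw [← Finset.sum_subset hsub hzero] at hexp
  have hx := congrArg (eval x) hexp
  rw [eval_shiftOp] at hx
  rw [hx, map_sum]
  apply Finset.sum_congr rfl
  intro k hk
  rw [if_pos (Finset.mem_Iic.mp hk), smul_eval]
  ring

lemma backward_binomial (hD1 : ∀ i, ShiftInv (D i)) (hp : IsBasicSeq D p)
    (ht : ∀ n, IsGoncarov D p Z n (t n))
    {A : Matrix (Fin d) (Fin d) ℝ} (hA : ∀ k : Fin d → ℕ, Z k = A.mulVec fun i => (k i : ℝ))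
    (n : Fin d → ℕ) :
    (aeval fun i => (X (Sum.inl i) + X (Sum.inr i) : MvPolynomial (Fin d ⊕ Fin d) ℝ)) (t n) =
      ∑ k ∈ Finset.Iic n, (∏ i, ((n i).choose (k i) : ℝ)) •
        ((rename Sum.inl (t k)) * (rename Sum.inr (t (n - k)))) := by
  apply MvPolynomial.funext
  intro ξ
  rw [eval_aeval, map_sum]
  have hxy : (fun i => eval ξ (X (Sum.inl i) + X (Sum.inr i))) =
      (fun i => ξ (Sum.inl i)) + (fun i => ξ (Sum.inr i)) := by
    funext i
    simp
  rw [hxy, backward_scalar hD1 hp ht hA n]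
  apply Finset.sum_congr rfl
  intro k _
  rw [smul_eval, eval_mul, eval_rename, eval_rename]
  rfl

lemma backward_span (hp : IsBasicSeq D p) (ht : ∀ n, IsGoncarov D p Z n (t n)) :
    Submodule.span ℝ (insert (t 0) (Set.range fun i : Fin d => t (Pi.single i 1))) =
      restrictTotalDegree (Fin d) ℝ 1 := by
  rw [← fam_span (t_deg hp ht) (t_duality hp ht) 1]
  congr 1
  ext f
  simp only [Set.mem_insert_iff, Set.mem_range, Set.mem_image, Set.mem_setOf_eq]
  constructor
  · rintro (rfl | ⟨i, rfl⟩)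
    · exact ⟨0, by simp, rfl⟩
    · exact ⟨Pi.single i 1, by rw [sum_single_one], rfl⟩
  · rintro ⟨m, hm, rfl⟩
    rcases index_le_one hm with rfl | ⟨i, rfl⟩
    · left; rfl
    · right; exact ⟨i, rfl⟩

end Gon


/-- the delta Gončarov polynomials of a grid `Z` form a sequence of
binomial type iff `Z = A·ℕ^d` for some `d × d` real matrix `A`. -/
theorem goncarov_binomial_type_iff_linear_grid {d : ℕ} (hd : 1 ≤ d)
    (D : Fin d → Module.End ℝ (MvP d)) (hD : IsDeltaSystem D)
    (p : (Fin d → ℕ) → MvP d) (hp : IsBasicSeq D p)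
    (Z : (Fin d → ℕ) → (Fin d → ℝ))
    (t : (Fin d → ℕ) → MvP d) (ht : ∀ n, IsGoncarov D p Z n (t n)) :
    IsBinomialType t ↔
      ∃ A : Matrix (Fin d) (Fin d) ℝ,
        ∀ k : Fin d → ℕ, Z k = A.mulVec fun i => (k i : ℝ) := by
  constructor
  · intro hbt
    exact Gon.forward_direction hD.1 hp ht hbt.2
  · rintro ⟨A, hA⟩
    exact ⟨Gon.backward_span hp ht, fun n => Gon.backward_binomial hD.1 hp ht hA n⟩

end
end
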